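/- arXiv:2603.13953 — 8 statements merged into one kernel-verified Lean document; each statement's English description precedes it below -/
import Mathlib

section
/- Let k ≥ 2 be an integer, let i, j ∈ {0,1,…,k}, set u = i/k és v = j/k, let ℓ be an integer with max(0, i+j−k) ≤ ℓ ≤ min(i,j), and set t = ℓ/k. If a permutation π of {1,…,k} is chosen uniformly at random among all k! permutations, then the probability that X_k(u,v) = t equals (ku)!·(kv)!·(k(1−u))!·(k(1−v))! / (k!·(k(u−t))!·(k(v−t))!·(k(1−u−v+t))!·(kt)!), i.e. i!·j!·(k−i)!·(k−j)! / (k!·(i−ℓ)!·(j−ℓ)!·(k+ℓ−i−j)!·ℓ!). -/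
open Nat Finset

/-- `Nperm k π i j` is the number of `m ∈ {1,…,k}` with `m ≤ i` and `π(m) ≤ j`,
where the permutation `π` of `{1,…,k}` is represented 0-indexed on `Fin k`. -/
def Nperm (k : ℕ) (π : Equiv.Perm (Fin k)) (i j : ℕ) : ℕ :=
  (Finset.univ.filter fun m : Fin k => (m : ℕ) < i ∧ ((π m : ℕ) < j)).card

section aux

variable {α : Type*} {p q : α → Prop} [DecidablePred p] [DecidablePred q]

lemma subtypeCongr_apply_pos' (e : {x // p x} ≃ {x // q x}) (f : {x // ¬p x} ≃ {x // ¬q x})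
    (a : α) (h : p a) : Equiv.subtypeCongr e f a = (e ⟨a, h⟩ : α) := by
  simp [Equiv.subtypeCongr, Equiv.sumCompl_symm_apply_of_pos h]

lemma subtypeCongr_apply_neg' (e : {x // p x} ≃ {x // q x}) (f : {x // ¬p x} ≃ {x // ¬q x})
    (a : α) (h : ¬ p a) : Equiv.subtypeCongr e f a = (f ⟨a, h⟩ : α) := by
  simp [Equiv.subtypeCongr, Equiv.sumCompl_symm_apply_of_neg h]

/-- Permutations sending `p` exactly onto `q` correspond to pairs of equivs. -/
def permRestrictEquiv (p q : α → Prop) [DecidablePred p] [DecidablePred q] :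
    {π : Equiv.Perm α // ∀ x, p x ↔ q (π x)} ≃
      (({x // p x} ≃ {x // q x}) × ({x // ¬ p x} ≃ {x // ¬ q x})) where
  toFun π := ⟨π.1.subtypeEquiv π.2, π.1.subtypeEquiv fun a => not_congr (π.2 a)⟩
  invFun ef := ⟨Equiv.subtypeCongr ef.1 ef.2, by
    intro x
    by_cases h : p x
    · rw [subtypeCongr_apply_pos' _ _ _ h]
      simpa [h] using (ef.1 ⟨x, h⟩).2
    · rw [subtypeCongr_apply_neg' _ _ _ h]
      simpa [h] using (ef.2 ⟨x, h⟩).2⟩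
  left_inv := by
    rintro ⟨π, hπ⟩
    ext x
    by_cases h : p x
    · rw [subtypeCongr_apply_pos' _ _ _ h]; simp [Equiv.subtypeEquiv]
    · rw [subtypeCongr_apply_neg' _ _ _ h]; simp [Equiv.subtypeEquiv]
  right_inv := by
    rintro ⟨e, f⟩
    refine Prod.ext ?_ ?_
    · ext x
      simp [Equiv.subtypeEquiv, subtypeCongr_apply_pos' e f x.1 x.2]
    · ext x
      simp [Equiv.subtypeEquiv, subtypeCongr_apply_neg' e f x.1 x.2]

lemma card_perm_cond [Fintype α] [DecidableEq α]
    (e0 : {x // p x} ≃ {x // q x}) :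
    (Finset.univ.filter fun π : Equiv.Perm α => ∀ x, p x ↔ q (π x)).card
      = (Fintype.card {x // p x})! * (Fintype.card {x // ¬ p x})! := by
  classical
  rw [← Fintype.card_subtype]
  have hc : Fintype.card {x // ¬ p x} = Fintype.card {x // ¬ q x} := by
    have h1 := Fintype.card_subtype_compl p
    have h2 := Fintype.card_subtype_compl q
    rw [h1, h2, Fintype.card_congr e0]
  rw [Fintype.card_congr (permRestrictEquiv p q), Fintype.card_prod,
    Fintype.card_equiv e0, Fintype.card_equiv (Fintype.equivOfCardEq hc), hc]

end aux

lemma card_filter_lt_val (k i : ℕ) (hi : i ≤ k) :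
    (Finset.univ.filter fun m : Fin k => (m : ℕ) < i).card = i := by
  have : (Finset.univ.filter fun m : Fin k => (m : ℕ) < i)
      = Finset.map ⟨fun x : Fin i => Fin.castLE hi x,
          fun a b hab => by simpa [Fin.ext_iff] using hab⟩ Finset.univ := by
    ext m
    simp only [Finset.mem_filter, Finset.mem_univ, true_and, Finset.mem_map,
      Function.Embedding.coeFn_mk]
    constructor
    · intro hm; exact ⟨⟨(m : ℕ), hm⟩, by simp [Fin.ext_iff]; rfl⟩
    · rintro ⟨a, rfl⟩; exact a.2
  rw [this]; simp

lemma hypergeom_count (k i j ℓ : ℕ) (hj : j ≤ k) (hℓi : ℓ ≤ i) :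
    (((Finset.univ : Finset (Fin k)).powersetCard i).filter
        (fun T => (T ∩ (Finset.univ.filter fun m : Fin k => (m : ℕ) < j)).card = ℓ)).card
      = Nat.choose j ℓ * Nat.choose (k - j) (i - ℓ) := by
  classical
  set B := (Finset.univ.filter fun m : Fin k => (m : ℕ) < j) with hB
  have hBc : B.card = j := card_filter_lt_val k j hj
  have hcards : Nat.choose j ℓ * Nat.choose (k - j) (i - ℓ)
      = ((Finset.powersetCard ℓ B) ×ˢ (Finset.powersetCard (i - ℓ) Bᶜ)).card := by
    rw [Finset.card_product, Finset.card_powersetCard, Finset.card_powersetCard, hBc,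
      Finset.card_compl, hBc, Fintype.card_fin]
  rw [hcards]
  refine Finset.card_nbij' (fun T => (T ∩ B, T \ B)) (fun P => P.1 ∪ P.2) ?_ ?_ ?_ ?_
  · rintro T hT
    simp only [Finset.mem_coe, Finset.mem_filter, Finset.mem_powersetCard] at hT
    obtain ⟨⟨hTu, hTc⟩, hTl⟩ := hT
    simp only [Finset.mem_coe, Finset.mem_product, Finset.mem_powersetCard]
    refine ⟨⟨Finset.inter_subset_right, hTl⟩, ⟨?_, ?_⟩⟩
    · intro x hx; simp only [Finset.mem_sdiff] at hx; simp [hx.2]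
    · have := Finset.card_inter_add_card_sdiff T B
      omega
  · rintro ⟨X, Y⟩ hP
    simp only [Finset.mem_coe, Finset.mem_product, Finset.mem_powersetCard] at hP
    obtain ⟨⟨hXB, hXc⟩, hYB, hYc⟩ := hP
    have hdisj : Disjoint X Y := by
      refine Finset.disjoint_left.2 fun a haX haY => ?_
      have := hYB haY; simp only [Finset.mem_compl] at this; exact this (hXB haX)
    simp only [Finset.mem_coe, Finset.mem_filter, Finset.mem_powersetCard]
    refine ⟨⟨Finset.subset_univ _, ?_⟩, ?_⟩
    · rw [Finset.card_union_of_disjoint hdisj, hXc, hYc]; omega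
    · have : (X ∪ Y) ∩ B = X := by
        ext a
        simp only [Finset.mem_inter, Finset.mem_union]
        constructor
        · rintro ⟨h1 | h1, h2⟩
          · exact h1
          · exact absurd h2 (by simpa using hYB h1)
        · intro h; exact ⟨Or.inl h, hXB h⟩
      rw [this, hXc]
  · intro T hT
    simp only
    ext a; by_cases h : a ∈ B <;> simp [h]
  · rintro ⟨X, Y⟩ hP
    simp only [Finset.mem_coe, Finset.mem_product, Finset.mem_powersetCard] at hP
    obtain ⟨⟨hXB, hXc⟩, hYB, hYc⟩ := hP
    have h1 : (X ∪ Y) ∩ B = X := by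
      ext a
      simp only [Finset.mem_inter, Finset.mem_union]
      constructor
      · rintro ⟨h1 | h1, h2⟩
        · exact h1
        · exact absurd h2 (by simpa using hYB h1)
      · intro h; exact ⟨Or.inl h, hXB h⟩
    have h2 : (X ∪ Y) \ B = Y := by
      ext a
      simp only [Finset.mem_sdiff, Finset.mem_union]
      constructor
      · rintro ⟨h1 | h1, h2⟩
        · exact absurd (hXB h1) h2
        · exact h1
      · intro h; exact ⟨Or.inr h, by simpa using hYB h⟩
    simp [h1, h2]

lemma Nperm_eq_card_inter (k i j : ℕ) (π : Equiv.Perm (Fin k)) :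
    Nperm k π i j = ((Finset.univ.filter fun m : Fin k => (m : ℕ) < i).image π ∩
      (Finset.univ.filter fun m : Fin k => (m : ℕ) < j)).card := by
  classical
  rw [Nperm]
  rw [show ((Finset.univ.filter fun m : Fin k => (m : ℕ) < i).image π ∩
      (Finset.univ.filter fun m : Fin k => (m : ℕ) < j))
      = (Finset.univ.filter fun m : Fin k => (m : ℕ) < i ∧ ((π m : ℕ) < j)).image π from ?_]
  · rw [Finset.card_image_of_injective _ π.injective]
  · ext y
    simp only [Finset.mem_inter, Finset.mem_image, Finset.mem_filter, Finset.mem_univ, true_and]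
    constructor
    · rintro ⟨⟨m, hm, rfl⟩, hy⟩; exact ⟨m, ⟨hm, hy⟩, rfl⟩
    · rintro ⟨m, ⟨hm, hj⟩, rfl⟩; exact ⟨⟨m, hm, rfl⟩, hj⟩

lemma image_eq_iff_pointwise (k i : ℕ) (π : Equiv.Perm (Fin k)) (T : Finset (Fin k)) :
    (Finset.univ.filter fun m : Fin k => (m : ℕ) < i).image π = T ↔
      ∀ x : Fin k, (x : ℕ) < i ↔ π x ∈ T := by
  classical
  constructor
  · rintro rfl x
    constructor
    · intro hx; exact Finset.mem_image_of_mem π (by simp [hx])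
    · intro hx
      obtain ⟨a, ha, hax⟩ := Finset.mem_image.1 hx
      obtain rfl : a = x := π.injective hax
      simpa using ha
  · intro h
    ext y
    simp only [Finset.mem_image, Finset.mem_filter, Finset.mem_univ, true_and]
    constructor
    · rintro ⟨m, hm, rfl⟩; exact (h m).1 hm
    · intro hy; exact ⟨π.symm y, (h _).2 (by simpa using hy), by simp⟩

open scoped Classical in
lemma main_count (k i j ℓ : ℕ) (hi : i ≤ k) (hj : j ≤ k) (hℓi : ℓ ≤ i) :
    (Finset.univ.filter fun π : Equiv.Perm (Fin k) => Nperm k π i j = ℓ).card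
      = Nat.choose j ℓ * Nat.choose (k - j) (i - ℓ) * (i ! * (k - i)!) := by
  set A := (Finset.univ.filter fun m : Fin k => (m : ℕ) < i) with hA
  set B := (Finset.univ.filter fun m : Fin k => (m : ℕ) < j) with hBdef
  have hAc : A.card = i := card_filter_lt_val k i hi
  set S := (((Finset.univ : Finset (Fin k)).powersetCard i).filter
      (fun T => (T ∩ B).card = ℓ)) with hS
  have hstep : (Finset.univ.filter fun π : Equiv.Perm (Fin k) => Nperm k π i j = ℓ).card
      = ∑ T ∈ S, ((Finset.univ.filter fun π : Equiv.Perm (Fin k) => Nperm k π i j = ℓ).filter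
          (fun π : Equiv.Perm (Fin k) => Finset.image (⇑π) A = T)).card := by
    refine Finset.card_eq_sum_card_fiberwise
      (f := fun π : Equiv.Perm (Fin k) => Finset.image (⇑π) A) ?_
    intro π hπ
    simp only [Finset.mem_coe, Finset.mem_filter, Finset.mem_univ, true_and] at hπ
    simp only [Finset.mem_coe, hS, Finset.mem_filter, Finset.mem_powersetCard]
    refine ⟨⟨Finset.subset_univ _, ?_⟩, ?_⟩
    · rw [Finset.card_image_of_injective _ π.injective, hAc]
    · rw [← Nperm_eq_card_inter k i j π]; exact hπ
  rw [hstep]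
  have hfiber : ∀ T ∈ S,
      ((Finset.univ.filter fun π : Equiv.Perm (Fin k) => Nperm k π i j = ℓ).filter
          (fun π : Equiv.Perm (Fin k) => Finset.image (⇑π) A = T)).card = i ! * (k - i)! := by
    intro T hT
    simp only [hS, Finset.mem_filter, Finset.mem_powersetCard] at hT
    obtain ⟨⟨-, hTc⟩, hTl⟩ := hT
    rw [Finset.filter_filter]
    have heq : (Finset.univ.filter fun π : Equiv.Perm (Fin k) =>
          Nperm k π i j = ℓ ∧ Finset.image (⇑π) A = T)
        = Finset.univ.filter fun π : Equiv.Perm (Fin k) =>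
            ∀ x : Fin k, (x : ℕ) < i ↔ π x ∈ T := by
      apply Finset.filter_congr
      intro π _
      rw [← image_eq_iff_pointwise k i π T]
      constructor
      · exact fun h => h.2
      · intro h
        refine ⟨?_, h⟩
        rw [Nperm_eq_card_inter k i j π, ← hA, ← hBdef, h, hTl]
    have e0 : {x : Fin k // (x : ℕ) < i} ≃ {y : Fin k // y ∈ T} := by
      refine Fintype.equivOfCardEq ?_
      rw [Fintype.card_subtype, ← hA, hAc, Fintype.card_coe, hTc]
    have hrhs : (Fintype.card {x : Fin k // (x : ℕ) < i})! *
        (Fintype.card {x : Fin k // ¬ (x : ℕ) < i})! = i ! * (k - i)! := by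
      congr 2
      · rw [Fintype.card_subtype, ← hA, hAc]
      · rw [Fintype.card_subtype_compl, Fintype.card_fin, Fintype.card_subtype, ← hA, hAc]
    rw [heq]
    convert (card_perm_cond e0).trans hrhs using 2
    exact (Finset.filter_congr_decidable _ _ _).trans
      (Finset.filter_congr_decidable _ _ _).symm
  rw [Finset.sum_congr rfl hfiber, Finset.sum_const, smul_eq_mul]
  rw [hS, hBdef, hypergeom_count k i j ℓ hj hℓi]

open scoped Classical in
/-- With `u = i/k`, `v = j/k`, `t = ℓ/k`, the probability (uniform over all `k!`
permutations) that `X_k(u,v) = t` equals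
`i!·j!·(k−i)!·(k−j)! / (k!·(i−ℓ)!·(j−ℓ)!·(k+ℓ−i−j)!·ℓ!)`. -/
theorem stmt_1 (k i j ℓ : ℕ) (hk : 2 ≤ k) (hi : i ≤ k) (hj : j ≤ k)
    (hℓ1 : i + j ≤ k + ℓ) (hℓ2 : ℓ ≤ min i j)
    (u v t : ℝ) (hu : u = (i : ℝ) / k) (hv : v = (j : ℝ) / k) (ht : t = (ℓ : ℝ) / k) :
    ((Finset.univ.filter fun π : Equiv.Perm (Fin k) =>
          (Nperm k π i j : ℝ) / k = t).card : ℝ) / (k ! : ℝ) =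
      ((i ! : ℝ) * (j !) * ((k - i)!) * ((k - j)!)) /
        ((k ! : ℝ) * ((i - ℓ)!) * ((j - ℓ)!) * ((k + ℓ - i - j)!) * (ℓ !)) := by
  have hℓi : ℓ ≤ i := le_trans hℓ2 (min_le_left _ _)
  have hℓj : ℓ ≤ j := le_trans hℓ2 (min_le_right _ _)
  have hkR : (k : ℝ) ≠ 0 := by
    have : 0 < k := by omega
    exact_mod_cast this.ne'
  have hfilt : (Finset.univ.filter fun π : Equiv.Perm (Fin k) =>
      (Nperm k π i j : ℝ) / k = t) = Finset.univ.filter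
        (fun π : Equiv.Perm (Fin k) => Nperm k π i j = ℓ) := by
    apply Finset.filter_congr
    intro π _
    rw [ht]
    constructor
    · intro h
      have h2 : (Nperm k π i j : ℝ) = (ℓ : ℝ) := by
        field_simp at h
        exact_mod_cast h
      exact_mod_cast h2
    · intro h; rw [h]
  rw [hfilt, main_count k i j ℓ hi hj hℓi]
  have h3 : k - j - (i - ℓ) = k + ℓ - i - j := by omega
  have h2 := Nat.choose_mul_factorial_mul_factorial (show i - ℓ ≤ k - j by omega)
  rw [h3] at h2
  have h1 := Nat.choose_mul_factorial_mul_factorial hℓj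
  have key : Nat.choose j ℓ * Nat.choose (k - j) (i - ℓ) * (i ! * (k - i)!) *
      ((i - ℓ)! * ((j - ℓ)! * ((k + ℓ - i - j)! * ℓ !)))
      = i ! * (j ! * ((k - i)! * (k - j)!)) := by
    calc Nat.choose j ℓ * Nat.choose (k - j) (i - ℓ) * (i ! * (k - i)!) *
        ((i - ℓ)! * ((j - ℓ)! * ((k + ℓ - i - j)! * ℓ !)))
        = (Nat.choose j ℓ * ℓ ! * (j - ℓ)!) *
          ((Nat.choose (k - j) (i - ℓ) * (i - ℓ)! * (k + ℓ - i - j)!) * (i ! * (k - i)!)) := by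
          ring
      _ = i ! * (j ! * ((k - i)! * (k - j)!)) := by rw [h1, h2]; ring
  have keyR : ((Nat.choose j ℓ : ℝ) * Nat.choose (k - j) (i - ℓ) * ((i)! * ((k - i)!)) *
      (((i - ℓ)!) * (((j - ℓ)!) * (((k + ℓ - i - j)!) * ((ℓ)!))))
      = ((i)!) * (((j)!) * (((k - i)!) * ((k - j)!)))) := by
    exact_mod_cast key
  have hd1 : (k ! : ℝ) ≠ 0 := by positivity
  have hd2 : ((k ! : ℝ) * ((i - ℓ)!) * ((j - ℓ)!) * ((k + ℓ - i - j)!) * (ℓ !)) ≠ 0 := by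
    positivity
  rw [div_eq_div_iff hd1 hd2]
  push_cast
  linear_combination (k ! : ℝ) * keyR
end

section
/- Let k ≥ 2 be an integer, let a, b, i, j ∈ {0,1,…,k} with a+i ≤ k and b+j ≤ k, and let ℓ be an integer. Then the number of permutations π of {1,…,k} satisfying |{m ∈ {1,…,k} : a+1 ≤ m ≤ a+i and b+1 ≤ π(m) ≤ b+j}| = ℓ equals the number of permutations π of {1,…,k} satisfying |{m ∈ {1,…,k} : m ≤ i and π(m) ≤ j}| = ℓ. In particular, the probability that the C-volume of a rectangle with vertices on the equidistant mesh equals a given value depends only on the side lengths of the rectangle and not on its position. -/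
open Nat Finset

lemma shift_apply (k : ℕ) (hk : 0 < k) (π : Equiv.Perm (Fin k)) (a b m : Fin k) :
    haveI : NeZero k := ⟨hk.ne'⟩
    ((Equiv.addRight b)⁻¹ * π * Equiv.addRight a) m = π (m + a) - b := by
  haveI : NeZero k := ⟨hk.ne'⟩
  rw [show (Equiv.addRight b)⁻¹ = (Equiv.addRight b).symm from rfl]
  simp only [Equiv.Perm.mul_apply, Equiv.coe_addRight]
  rw [Equiv.symm_apply_eq]
  simp [sub_add_cancel]

lemma inner_card (k a b i j : ℕ) (ha : a < k) (hb : b < k) (hi : a + i ≤ k)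
    (hj : b + j ≤ k) (π : Equiv.Perm (Fin k)) :
    haveI : NeZero k := ⟨by omega⟩
    Nperm k ((Equiv.addRight (⟨b, hb⟩ : Fin k))⁻¹ * π * Equiv.addRight (⟨a, ha⟩ : Fin k)) i j
      = (Finset.univ.filter fun m : Fin k =>
            (a ≤ (m : ℕ) ∧ (m : ℕ) < a + i) ∧
              (b ≤ (π m : ℕ) ∧ (π m : ℕ) < b + j)).card := by
  haveI : NeZero k := ⟨by omega⟩
  have hk0 : 0 < k := by omega
  unfold Nperm
  apply Finset.card_bij' (i := fun m _ => m + (⟨a, ha⟩ : Fin k))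
    (j := fun m _ => m - (⟨a, ha⟩ : Fin k))
  · -- forward membership
    intro m hm
    simp only [mem_filter, mem_univ, true_and] at hm ⊢
    obtain ⟨hm1, hm2⟩ := hm
    rw [shift_apply k hk0] at hm2
    have hadd : ((m + (⟨a, ha⟩ : Fin k) : Fin k) : ℕ) = (m : ℕ) + a := by
      rw [Fin.add_def]
      show ((m : ℕ) + a) % k = (m : ℕ) + a
      exact Nat.mod_eq_of_lt (by omega)
    have hsub : ∀ x : Fin k, ((x - (⟨b, hb⟩ : Fin k) : Fin k) : ℕ) < j ↔
        (b ≤ (x : ℕ) ∧ (x : ℕ) < b + j) := by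
      intro x
      rw [Fin.sub_def]
      simp only
      rcases le_or_gt b (x : ℕ) with h | h
      · rw [show (k - b + (x:ℕ)) % k = (x:ℕ) - b by
          rw [show k - b + (x:ℕ) = ((x:ℕ) - b) + k by omega, Nat.add_mod_right]
          exact Nat.mod_eq_of_lt (by omega)]
        omega
      · rw [Nat.mod_eq_of_lt (by omega)]
        omega
    rw [hsub] at hm2
    rw [hadd]
    exact ⟨⟨by omega, by omega⟩, hm2⟩
  · -- backward membership
    intro m hm
    simp only [mem_filter, mem_univ, true_and] at hm ⊢
    obtain ⟨⟨hm1, hm2⟩, hm3, hm4⟩ := hm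
    have hsub : ((m - (⟨a, ha⟩ : Fin k) : Fin k) : ℕ) = (m : ℕ) - a := by
      rw [Fin.sub_def]
      simp only
      rw [show k - a + (m:ℕ) = ((m:ℕ) - a) + k by omega, Nat.add_mod_right]
      exact Nat.mod_eq_of_lt (by omega)
    constructor
    · rw [hsub]; omega
    · rw [shift_apply k hk0]
      have hback : m - (⟨a, ha⟩ : Fin k) + (⟨a, ha⟩ : Fin k) = m := sub_add_cancel m _
      rw [hback, Fin.sub_def]
      simp only
      rw [show k - b + ((π m : ℕ)) = ((π m : ℕ) - b) + k by omega, Nat.add_mod_right]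
      rw [Nat.mod_eq_of_lt (by omega)]
      omega
  · intro m _; exact add_sub_cancel_right m _
  · intro m _; exact sub_add_cancel m _

/-- The number of permutations `π` of `{1,…,k}` with
`|{m : a+1 ≤ m ≤ a+i, b+1 ≤ π(m) ≤ b+j}| = ℓ` equals the number of permutations with
`|{m : m ≤ i, π(m) ≤ j}| = ℓ`: the distribution of the C-volume of a mesh rectangle
depends only on its side lengths, not on its position. -/
theorem stmt_2 (k a b i j ℓ : ℕ) (hk : 2 ≤ k) (hi : a + i ≤ k) (hj : b + j ≤ k) :
    (Finset.univ.filter fun π : Equiv.Perm (Fin k) =>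
        (Finset.univ.filter fun m : Fin k =>
            (a ≤ (m : ℕ) ∧ (m : ℕ) < a + i) ∧
              (b ≤ (π m : ℕ) ∧ (π m : ℕ) < b + j)).card = ℓ).card =
      (Finset.univ.filter fun π : Equiv.Perm (Fin k) => Nperm k π i j = ℓ).card := by
  haveI : NeZero k := ⟨by omega⟩
  rcases Nat.eq_zero_or_pos i with hi0 | hi0
  · subst hi0
    have h1 : ∀ π : Equiv.Perm (Fin k),
        (Finset.univ.filter fun m : Fin k =>
            (a ≤ (m : ℕ) ∧ (m : ℕ) < a + 0) ∧
              (b ≤ (π m : ℕ) ∧ (π m : ℕ) < b + j)).card = 0 := by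
      intro π
      rw [Finset.card_eq_zero, Finset.filter_eq_empty_iff]
      intro m _
      omega
    have h2 : ∀ π : Equiv.Perm (Fin k), Nperm k π 0 j = 0 := by
      intro π
      rw [Nperm, Finset.card_eq_zero, Finset.filter_eq_empty_iff]
      intro m _
      omega
    simp only [h1, h2]
  rcases Nat.eq_zero_or_pos j with hj0 | hj0
  · subst hj0
    have h1 : ∀ π : Equiv.Perm (Fin k),
        (Finset.univ.filter fun m : Fin k =>
            (a ≤ (m : ℕ) ∧ (m : ℕ) < a + i) ∧
              (b ≤ (π m : ℕ) ∧ (π m : ℕ) < b + 0)).card = 0 := by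
      intro π
      rw [Finset.card_eq_zero, Finset.filter_eq_empty_iff]
      intro m _
      omega
    have h2 : ∀ π : Equiv.Perm (Fin k), Nperm k π i 0 = 0 := by
      intro π
      rw [Nperm, Finset.card_eq_zero, Finset.filter_eq_empty_iff]
      intro m _
      omega
    simp only [h1, h2]
  have ha : a < k := by omega
  have hb : b < k := by omega
  have hk0 : 0 < k := by omega
  apply Finset.card_bij'
    (i := fun π _ => (Equiv.addRight (⟨b, hb⟩ : Fin k))⁻¹ * π * Equiv.addRight (⟨a, ha⟩ : Fin k))
    (j := fun π _ => Equiv.addRight (⟨b, hb⟩ : Fin k) * π * (Equiv.addRight (⟨a, ha⟩ : Fin k))⁻¹)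
  · intro π hπ
    simp only [mem_filter, mem_univ, true_and] at hπ ⊢
    rw [inner_card k a b i j ha hb hi hj π]
    exact hπ
  · intro π hπ
    simp only [mem_filter, mem_univ, true_and] at hπ ⊢
    have := inner_card k a b i j ha hb hi hj
      (Equiv.addRight (⟨b, hb⟩ : Fin k) * π * (Equiv.addRight (⟨a, ha⟩ : Fin k))⁻¹)
    rw [show (Equiv.addRight (⟨b, hb⟩ : Fin k))⁻¹ *
        (Equiv.addRight (⟨b, hb⟩ : Fin k) * π * (Equiv.addRight (⟨a, ha⟩ : Fin k))⁻¹) *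
        Equiv.addRight (⟨a, ha⟩ : Fin k) = π by group] at this
    rw [← this]
    exact hπ
  · intro π _; group
  · intro π _; group
end

section
/- Let k ≥ 2 be an integer and let i, j ∈ {0,1,…,k}, and set u = i/k and v = j/k. If a permutation π of {1,…,k} is chosen uniformly at random among all k! permutations, then the second moment E[X_k(u,v)²] equals ij/k³ + i(i−1)j(j−1)/(k³(k−1)); equivalently, the sum over all permutations π of {1,…,k} of |{m ∈ {1,…,k} : m ≤ i and π(m) ≤ j}|² equals (k−1)!·i·j + (k−2)!·i(i−1)·j(j−1). -/
open Nat Finset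

section Aux
open Equiv
lemma exists_perm_pair {α : Type*} [DecidableEq α] {t t' s s' : α} (h1 : t ≠ t') (h2 : s ≠ s') :
    ∃ σ : Equiv.Perm α, σ t = s ∧ σ t' = s' := by
  refine ⟨(Equiv.swap t s).trans (Equiv.swap (Equiv.swap t s t') s'), ?_, ?_⟩
  · simp only [Equiv.trans_apply, Equiv.swap_apply_left]
    rw [Equiv.swap_apply_of_ne_of_ne]
    · exact fun h => h1 ((Equiv.swap t s).injective (h.symm.trans (Equiv.swap_apply_left t s).symm)).symm
    · exact h2
  · simp only [Equiv.trans_apply, Equiv.swap_apply_left]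

lemma fiber1_eq {k : ℕ} (m t t' : Fin k) :
    (univ.filter fun π : Equiv.Perm (Fin k) => π m = t).card
      = (univ.filter fun π : Equiv.Perm (Fin k) => π m = t').card := by
  apply Finset.card_bij' (fun π _ => Equiv.swap t t' * π) (fun π _ => Equiv.swap t t' * π)
  · intro π hπ
    simp only [mem_filter, mem_univ, true_and] at hπ ⊢
    simp [Equiv.Perm.mul_apply, hπ]
  · intro π hπ
    simp only [mem_filter, mem_univ, true_and] at hπ ⊢
    simp [Equiv.Perm.mul_apply, hπ, Equiv.swap_apply_right]
  · intro π _; simp [← mul_assoc]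
  · intro π _; simp [← mul_assoc]

lemma fiber1 {k : ℕ} (hk : 0 < k) (m t : Fin k) :
    (univ.filter fun π : Equiv.Perm (Fin k) => π m = t).card = (k-1)! := by
  have hsum : ∑ t' : Fin k, (univ.filter fun π : Equiv.Perm (Fin k) => π m = t').card = k ! := by
    rw [← Finset.card_eq_sum_card_fiberwise (f := fun π : Equiv.Perm (Fin k) => π m)
      (t := univ) (fun _ _ => mem_univ _)]
    simp [Fintype.card_perm]
  rw [Finset.sum_congr rfl (fun t' _ => (fiber1_eq m t' t)), Finset.sum_const,
    Finset.card_univ, Fintype.card_fin, smul_eq_mul] at hsum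
  have hk' : k * (k-1)! = k ! := Nat.mul_factorial_pred hk.ne'
  exact Nat.eq_of_mul_eq_mul_left hk (by omega)

lemma fiber2_eq {k : ℕ} {m m' : Fin k} (p q : Fin k × Fin k)
    (hp : p.1 ≠ p.2) (hq : q.1 ≠ q.2) :
    (univ.filter fun π : Equiv.Perm (Fin k) => π m = p.1 ∧ π m' = p.2).card
      = (univ.filter fun π : Equiv.Perm (Fin k) => π m = q.1 ∧ π m' = q.2).card := by
  obtain ⟨σ, hσ1, hσ2⟩ := exists_perm_pair hp hq
  apply Finset.card_bij' (fun π _ => σ * π) (fun π _ => σ⁻¹ * π)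
  · intro π hπ
    simp only [mem_filter, mem_univ, true_and] at hπ ⊢
    simp [Equiv.Perm.mul_apply, hπ.1, hπ.2, hσ1, hσ2]
  · intro π hπ
    simp only [mem_filter, mem_univ, true_and] at hπ ⊢
    constructor
    · simp [Equiv.Perm.mul_apply, hπ.1, ← hσ1]
    · simp [Equiv.Perm.mul_apply, hπ.2, ← hσ2]
  · intro π _; simp [← mul_assoc]
  · intro π _; simp [← mul_assoc]

lemma fiber2 {k : ℕ} (hk : 2 ≤ k) {m m' : Fin k} (hm : m ≠ m') {t t' : Fin k} (ht : t ≠ t') :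
    (univ.filter fun π : Equiv.Perm (Fin k) => π m = t ∧ π m' = t').card = (k-2)! := by
  have hsum : ∑ p ∈ (univ : Finset (Fin k)).offDiag,
      (univ.filter fun π : Equiv.Perm (Fin k) => π m = p.1 ∧ π m' = p.2).card = k ! := by
    have := Finset.card_eq_sum_card_fiberwise (f := fun π : Equiv.Perm (Fin k) => (π m, π m'))
      (s := univ) (t := (univ : Finset (Fin k)).offDiag) ?_
    · rw [Finset.card_univ, Fintype.card_perm, Fintype.card_fin] at this
      rw [this]
      apply Finset.sum_congr rfl
      intro p _
      congr 1
      apply Finset.filter_congr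
      intro π _
      cases p
      simp [Prod.ext_iff]
    · intro π _
      simp only [Finset.mem_coe, Finset.mem_offDiag, mem_univ, true_and]
      exact fun h => hm (π.injective h)
  rw [Finset.sum_congr rfl (fun p hp => fiber2_eq p (t, t') (Finset.mem_offDiag.mp hp).2.2 ht),
    Finset.sum_const, smul_eq_mul, Finset.offDiag_card, Finset.card_univ, Fintype.card_fin] at hsum
  have hkk : k * k - k = k * (k - 1) := by rw [Nat.mul_sub, mul_one]
  rw [hkk] at hsum
  have h1 : (k * (k - 1)) * (k-2)! = k ! := by
    have e1 : k * (k-1)! = k ! := Nat.mul_factorial_pred (by omega)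
    have e2 : (k-1) * (k-2)! = (k-1)! := by
      have := Nat.mul_factorial_pred (n := k - 1) (by omega)
      rwa [show k - 1 - 1 = k - 2 by omega] at this
    rw [mul_assoc, e2, e1]
  have hpos : 0 < k * (k - 1) := Nat.mul_pos (by omega) (by omega)
  exact Nat.eq_of_mul_eq_mul_left hpos (hsum.trans h1.symm)

lemma card_lt {k i : ℕ} (hi : i ≤ k) : (univ.filter fun m : Fin k => (m:ℕ) < i).card = i := by
  rw [Finset.card_filter, Fin.sum_univ_eq_sum_range (fun n => if n < i then 1 else 0),
    ← Finset.card_filter]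
  have : (range k).filter (· < i) = range i := by ext x; simp; omega
  rw [this, card_range]

-- one-point count

lemma countB1 {k j : ℕ} (hk : 0 < k) (hj : j ≤ k) (m : Fin k) :
    (univ.filter fun π : Equiv.Perm (Fin k) => ((π m : ℕ) < j)).card = j * (k-1)! := by
  set B : Finset (Fin k) := univ.filter (fun t => (t:ℕ) < j) with hBdef
  have key := Finset.card_eq_sum_card_fiberwise
    (f := fun π : Equiv.Perm (Fin k) => π m)
    (s := univ.filter fun π : Equiv.Perm (Fin k) => ((π m : ℕ) < j)) (t := B)
    (fun π hπ => by simp only [Finset.mem_coe, hBdef, mem_filter, mem_univ, true_and] at hπ ⊢; exact hπ)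
  rw [key]
  have : ∀ t ∈ B, ((univ.filter fun π : Equiv.Perm (Fin k) => ((π m : ℕ) < j)).filter
      (fun π => π m = t)).card = (k-1)! := by
    intro t ht
    rw [Finset.filter_filter]
    simp only [hBdef, mem_filter, mem_univ, true_and] at ht
    have heq : (univ.filter fun π : Equiv.Perm (Fin k) => ((π m : ℕ) < j) ∧ π m = t)
        = univ.filter fun π : Equiv.Perm (Fin k) => π m = t :=
      Finset.filter_congr fun π _ => by
        constructor
        · exact And.right
        · intro h; exact ⟨h ▸ ht, h⟩
    rw [heq]
    exact fiber1 hk m t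
  rw [Finset.sum_congr rfl this, Finset.sum_const, smul_eq_mul, hBdef, card_lt hj]

-- two-point count

lemma countB2 {k j : ℕ} (hk : 2 ≤ k) (hj : j ≤ k) {m m' : Fin k} (hm : m ≠ m') :
    (univ.filter fun π : Equiv.Perm (Fin k) => ((π m : ℕ) < j) ∧ ((π m' : ℕ) < j)).card
      = (j * (j-1)) * (k-2)! := by
  set B : Finset (Fin k) := univ.filter (fun t => (t:ℕ) < j) with hBdef
  set s := univ.filter fun π : Equiv.Perm (Fin k) => ((π m : ℕ) < j) ∧ ((π m' : ℕ) < j) with hs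
  have key := Finset.card_eq_sum_card_fiberwise
    (f := fun π : Equiv.Perm (Fin k) => (π m, π m')) (s := s) (t := B.offDiag)
    (fun π hπ => by
      simp only [Finset.mem_coe, hs, mem_filter, mem_univ, true_and] at hπ
      simp only [Finset.mem_coe, Finset.mem_offDiag, hBdef, mem_filter, mem_univ, true_and]
      exact ⟨hπ.1, hπ.2, fun h => hm (π.injective h)⟩)
  rw [key]
  have : ∀ p ∈ B.offDiag, (s.filter (fun π => (π m, π m') = p)).card = (k-2)! := by
    intro p hp
    simp only [Finset.mem_offDiag, hBdef, mem_filter, mem_univ, true_and] at hp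
    rw [hs, Finset.filter_filter]
    have heq : (univ.filter fun π : Equiv.Perm (Fin k) =>
        (((π m : ℕ) < j) ∧ ((π m' : ℕ) < j)) ∧ (π m, π m') = p)
        = univ.filter fun π : Equiv.Perm (Fin k) => π m = p.1 ∧ π m' = p.2 :=
      Finset.filter_congr fun π _ => by
        simp only [Prod.ext_iff]
        constructor
        · exact And.right
        · rintro ⟨h1, h2⟩; exact ⟨⟨h1 ▸ hp.1, h2 ▸ hp.2.1⟩, h1, h2⟩
    rw [heq]
    exact fiber2 hk hm hp.2.2
  rw [Finset.sum_congr rfl this, Finset.sum_const, smul_eq_mul, Finset.offDiag_card,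
    hBdef, card_lt hj, Nat.mul_sub, mul_one]

end Aux

private lemma sumsq {k i j : ℕ} (hk : 2 ≤ k) (hi : i ≤ k) (hj : j ≤ k) :
    ∑ π : Equiv.Perm (Fin k), (Nperm k π i j) ^ 2 =
      (k - 1)! * i * j + (k - 2)! * (i * (i - 1)) * (j * (j - 1)) := by
  have hk0 : 0 < k := by omega
  set A := univ.filter (fun m : Fin k => (m:ℕ) < i) with hA
  have hAcard : A.card = i := card_lt hi
  have hN : ∀ π : Equiv.Perm (Fin k),
      Nperm k π i j = ∑ m ∈ A, (if ((π m : ℕ) < j) then 1 else 0) := by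
    intro π
    rw [Nperm, ← Finset.card_filter, hA, Finset.filter_filter]
  calc ∑ π : Equiv.Perm (Fin k), (Nperm k π i j)^2
      = ∑ π : Equiv.Perm (Fin k), ∑ m ∈ A, ∑ m' ∈ A,
          (if ((π m:ℕ) < j) then 1 else 0) * (if ((π m':ℕ) < j) then 1 else 0) := by
        refine Finset.sum_congr rfl fun π _ => ?_
        rw [hN π, sq, Finset.sum_mul_sum]
    _ = ∑ m ∈ A, ∑ m' ∈ A, ∑ π : Equiv.Perm (Fin k),
          (if ((π m:ℕ) < j) then 1 else 0) * (if ((π m':ℕ) < j) then 1 else 0) := by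
        rw [Finset.sum_comm]
        exact Finset.sum_congr rfl fun m _ => Finset.sum_comm
    _ = ∑ m ∈ A, ∑ m' ∈ A,
          (if m = m' then j * (k-1)! else (j * (j-1)) * (k-2)!) := by
        refine Finset.sum_congr rfl fun m _ => Finset.sum_congr rfl fun m' _ => ?_
        by_cases h : m = m'
        · subst h
          rw [if_pos rfl, ← countB1 hk0 hj m, Finset.card_filter]
          exact Finset.sum_congr rfl fun π _ => by by_cases hP : ((π m:ℕ) < j) <;> simp [hP]
        · rw [if_neg h, ← countB2 hk hj h, Finset.card_filter]
          exact Finset.sum_congr rfl fun π _ => by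
            by_cases hP : ((π m:ℕ) < j) <;> by_cases hQ : ((π m':ℕ) < j) <;> simp [hP, hQ]
    _ = ∑ m ∈ A, (j * (k-1)! + (i-1) * ((j * (j-1)) * (k-2)!)) := by
        refine Finset.sum_congr rfl fun m hm => ?_
        rw [← Finset.add_sum_erase _ _ hm, if_pos rfl]
        congr 1
        rw [Finset.sum_congr rfl (fun m' hm' => if_neg (Finset.ne_of_mem_erase hm').symm),
          Finset.sum_const, smul_eq_mul, Finset.card_erase_of_mem hm, hAcard]
    _ = i * (j * (k-1)! + (i-1) * ((j * (j-1)) * (k-2)!)) := by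
        rw [Finset.sum_const, smul_eq_mul, hAcard]
    _ = (k - 1)! * i * j + (k - 2)! * (i * (i - 1)) * (j * (j - 1)) := by ring

/-- The second moment of `X_k(i/k, j/k)` (uniform over all `k!` permutations) equals
`ij/k³ + i(i−1)j(j−1)/(k³(k−1))`; equivalently
`∑_π |{m : m ≤ i, π(m) ≤ j}|² = (k−1)!·i·j + (k−2)!·i(i−1)·j(j−1)`. -/
theorem stmt_4 (k i j : ℕ) (hk : 2 ≤ k) (hi : i ≤ k) (hj : j ≤ k) :
    (1 / (k ! : ℝ)) * ∑ π : Equiv.Perm (Fin k), ((Nperm k π i j : ℝ) / k) ^ 2 =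
        (i : ℝ) * j / (k : ℝ) ^ 3 +
          (i : ℝ) * ((i : ℝ) - 1) * j * ((j : ℝ) - 1) / ((k : ℝ) ^ 3 * ((k : ℝ) - 1)) ∧
      ∑ π : Equiv.Perm (Fin k), (Nperm k π i j) ^ 2 =
        (k - 1)! * i * j + (k - 2)! * (i * (i - 1)) * (j * (j - 1)) := by
  have hnat := sumsq hk hi hj
  refine ⟨?_, hnat⟩
  have castmul : ∀ n : ℕ, ((n * (n - 1) : ℕ) : ℝ) = (n : ℝ) * ((n : ℝ) - 1) := by
    intro n
    cases n with
    | zero => simp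
    | succ n => push_cast [Nat.succ_sub_one]; ring
  have hsum : ∑ π : Equiv.Perm (Fin k), ((Nperm k π i j : ℝ) / k) ^ 2
      = ((∑ π : Equiv.Perm (Fin k), (Nperm k π i j) ^ 2 : ℕ) : ℝ) / (k : ℝ) ^ 2 := by
    push_cast
    rw [Finset.sum_div]
    exact Finset.sum_congr rfl fun π _ => by rw [div_pow]
  rw [hsum, hnat]
  have hcast : (((k - 1)! * i * j + (k - 2)! * (i * (i - 1)) * (j * (j - 1)) : ℕ) : ℝ)
      = ((k - 1)! : ℝ) * i * j
        + ((k - 2)! : ℝ) * ((i : ℝ) * ((i : ℝ) - 1)) * ((j : ℝ) * ((j : ℝ) - 1)) := by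
    rw [Nat.cast_add, Nat.cast_mul, Nat.cast_mul, Nat.cast_mul, Nat.cast_mul, castmul i, castmul j]
  rw [hcast]
  have e1 : ((k)! : ℝ) = (k : ℝ) * ((k - 1)! : ℝ) := by
    exact_mod_cast congrArg (Nat.cast : ℕ → ℝ) (Nat.mul_factorial_pred (by omega)).symm
  have e2 : ((k - 1)! : ℝ) = ((k : ℝ) - 1) * ((k - 2)! : ℝ) := by
    have h : (k - 1) * (k - 2)! = (k - 1)! := by
      have := Nat.mul_factorial_pred (n := k - 1) (by omega)
      rwa [show k - 1 - 1 = k - 2 by omega] at this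
    calc ((k - 1)! : ℝ) = (((k - 1) * (k - 2)! : ℕ) : ℝ) := by rw [h]
      _ = ((k : ℝ) - 1) * ((k - 2)! : ℝ) := by
          rw [Nat.cast_mul, Nat.cast_sub (by omega : 1 ≤ k)]; norm_num
  have hk0 : (k : ℝ) ≠ 0 := by positivity
  have hk1 : (k : ℝ) - 1 ≠ 0 := by
    have : (2 : ℝ) ≤ (k : ℝ) := by exact_mod_cast hk
    linarith
  have ha : ((k - 2)! : ℝ) ≠ 0 := by positivity
  rw [e1, e2]
  field_simp
end

section
/- Let k ≥ 2 be an integer and let i, j ∈ {0,1,…,k}, and set u = i/k and v = j/k. If a permutation π of {1,…,k} is chosen uniformly at random among all k! permutations, then the variance of X_k(u,v) equals uv(1−u)(1−v)/(k−1). -/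
open Nat Finset

section Counting

variable {k : ℕ}

lemma card_val_lt (k j : ℕ) (hj : j ≤ k) :
    ((univ : Finset (Fin k)).filter fun b : Fin k => (b : ℕ) < j).card = j := by
  rw [← Finset.card_range j]
  apply Finset.card_nbij (fun b : Fin k => (b : ℕ))
  · intro a ha
    simp only [mem_coe, mem_filter, mem_univ, true_and] at ha
    simpa using ha
  · intro a _ b _ h
    exact Fin.val_injective h
  · intro n hn
    simp only [Finset.coe_range, Set.mem_Iio] at hn
    exact ⟨⟨n, lt_of_lt_of_le hn hj⟩, by simp [hn], rfl⟩

lemma perm_card_lt (j : ℕ) (hj : j ≤ k) (π : Equiv.Perm (Fin k)) :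
    ((univ : Finset (Fin k)).filter fun a : Fin k => ((π a : ℕ) < j)).card = j := by
  have key : ((univ : Finset (Fin k)).filter fun a : Fin k => ((π a : ℕ) < j)).card
      = ((univ : Finset (Fin k)).filter fun b : Fin k => (b : ℕ) < j).card := by
    apply Finset.card_nbij (fun a => π a)
    · intro a ha
      simp only [mem_coe, mem_filter, mem_univ, true_and] at ha ⊢
      exact ha
    · intro a _ b _ h
      exact π.injective h
    · intro b hb
      simp only [Finset.coe_filter, Set.mem_setOf_eq, mem_univ, true_and] at hb ⊢
      exact ⟨π.symm b, by simpa using hb, by simp⟩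
  rw [key, card_val_lt k j hj]

lemma sum_ind_one (j : ℕ) (hk : 1 ≤ k) (hj : j ≤ k) (a : Fin k) :
    (∑ π : Equiv.Perm (Fin k), if ((π a : ℕ) < j) then 1 else 0) = j * (k - 1)! := by
  classical
  set c : ℕ := ∑ π : Equiv.Perm (Fin k), if ((π a : ℕ) < j) then 1 else 0 with hc
  have hconst : ∀ a' : Fin k,
      (∑ π : Equiv.Perm (Fin k), if ((π a' : ℕ) < j) then 1 else 0) = c := by
    intro a'
    have := Equiv.sum_comp (Equiv.mulRight (Equiv.swap a a'))
      (fun π : Equiv.Perm (Fin k) => if ((π a' : ℕ) < j) then (1 : ℕ) else 0)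
    rw [hc, ← this]
    refine Finset.sum_congr rfl fun π _ => ?_
    simp [Equiv.Perm.mul_apply, Equiv.swap_apply_right]
  have hdouble : ∑ a' : Fin k,
      (∑ π : Equiv.Perm (Fin k), if ((π a' : ℕ) < j) then 1 else 0) = k ! * j := by
    rw [Finset.sum_comm]
    have hin : ∀ π : Equiv.Perm (Fin k),
        (∑ a' : Fin k, if ((π a' : ℕ) < j) then 1 else 0) = j := by
      intro π
      rw [← Finset.card_filter]
      exact perm_card_lt j hj π
    simp only [hin, Finset.sum_const, Finset.card_univ, Fintype.card_perm, Fintype.card_fin,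
      smul_eq_mul]
  have hkey : k * c = k * (j * (k - 1)!) := by
    have h1 : ∑ a' : Fin k,
        (∑ π : Equiv.Perm (Fin k), if ((π a' : ℕ) < j) then 1 else 0) = k * c := by
      simp [hconst, Finset.sum_const, Finset.card_univ, mul_comm]
    have h2 : k * (j * (k - 1)!) = k ! * j := by
      rw [← Nat.mul_factorial_pred (n := k) (by omega)]; ring
    rw [← h1, hdouble, h2]
  exact Nat.eq_of_mul_eq_mul_left (by omega) hkey

lemma sum_ind_two (j : ℕ) (hk : 2 ≤ k) (hj : j ≤ k) (a a' : Fin k) (hne : a' ≠ a) :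
    (∑ π : Equiv.Perm (Fin k), if ((π a : ℕ) < j ∧ (π a' : ℕ) < j) then 1 else 0)
      = j * (j - 1) * (k - 2)! := by
  classical
  set c : ℕ := ∑ π : Equiv.Perm (Fin k),
      if ((π a : ℕ) < j ∧ (π a' : ℕ) < j) then 1 else 0 with hc
  have hconst : ∀ a'' ∈ (univ : Finset (Fin k)).erase a,
      (∑ π : Equiv.Perm (Fin k), if ((π a : ℕ) < j ∧ (π a'' : ℕ) < j) then 1 else 0) = c := by
    intro a'' ha''
    have ha''ne : a'' ≠ a := (Finset.mem_erase.mp ha'').1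
    have := Equiv.sum_comp (Equiv.mulRight (Equiv.swap a' a''))
      (fun π : Equiv.Perm (Fin k) => if ((π a : ℕ) < j ∧ (π a'' : ℕ) < j) then (1 : ℕ) else 0)
    rw [hc, ← this]
    refine Finset.sum_congr rfl fun π _ => ?_
    have h1 : (π * Equiv.swap a' a'') a = π a := by
      simp [Equiv.Perm.mul_apply, Equiv.swap_apply_of_ne_of_ne hne.symm (Ne.symm ha''ne)]
    have h2 : (π * Equiv.swap a' a'') a'' = π a' := by
      simp [Equiv.Perm.mul_apply, Equiv.swap_apply_right]
    simp only [Equiv.coe_mulRight]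
    simp only [h1, h2]
  have hinner : ∀ π : Equiv.Perm (Fin k),
      (∑ a'' ∈ (univ : Finset (Fin k)).erase a,
        if ((π a : ℕ) < j ∧ (π a'' : ℕ) < j) then 1 else 0)
        = (if ((π a : ℕ) < j) then 1 else 0) * (j - 1) := by
    intro π
    by_cases h : (π a : ℕ) < j
    · simp only [h, true_and, if_true, one_mul]
      rw [← Finset.card_filter]
      rw [Finset.filter_erase]
      rw [Finset.card_erase_of_mem (by simp [h])]
      rw [perm_card_lt j hj π]
    · simp [h]
  have hkey : (k - 1) * c = (k - 1) * (j * (j - 1) * (k - 2)!) := by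
    have h1 : ∑ a'' ∈ (univ : Finset (Fin k)).erase a,
        (∑ π : Equiv.Perm (Fin k), if ((π a : ℕ) < j ∧ (π a'' : ℕ) < j) then 1 else 0)
          = (k - 1) * c := by
      rw [Finset.sum_congr rfl hconst]
      simp [Finset.card_erase_of_mem, Finset.card_univ]
    have h2 : ∑ a'' ∈ (univ : Finset (Fin k)).erase a,
        (∑ π : Equiv.Perm (Fin k), if ((π a : ℕ) < j ∧ (π a'' : ℕ) < j) then 1 else 0)
          = (j - 1) * (j * (k - 1)!) := by
      rw [Finset.sum_comm]
      calc ∑ π : Equiv.Perm (Fin k), ∑ a'' ∈ (univ : Finset (Fin k)).erase a,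
            (if ((π a : ℕ) < j ∧ (π a'' : ℕ) < j) then 1 else 0)
          = ∑ π : Equiv.Perm (Fin k), (if ((π a : ℕ) < j) then 1 else 0) * (j - 1) :=
            Finset.sum_congr rfl fun π _ => hinner π
        _ = (∑ π : Equiv.Perm (Fin k), (if ((π a : ℕ) < j) then 1 else 0)) * (j - 1) := by
            rw [Finset.sum_mul]
        _ = (j * (k - 1)!) * (j - 1) := by rw [sum_ind_one j (by omega) hj a]
        _ = (j - 1) * (j * (k - 1)!) := by ring
    have h3 : (k - 1) * (j * (j - 1) * (k - 2)!) = (j - 1) * (j * (k - 1)!) := by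
      have : (k - 1) * (k - 2)! = (k - 1)! := by
        have := Nat.mul_factorial_pred (n := k - 1) (by omega)
        simpa [Nat.sub_sub] using this
      calc (k - 1) * (j * (j - 1) * (k - 2)!) = j * (j - 1) * ((k - 1) * (k - 2)!) := by ring
        _ = j * (j - 1) * (k - 1)! := by rw [this]
        _ = (j - 1) * (j * (k - 1)!) := by ring
    rw [← h1, h2, h3]
  exact Nat.eq_of_mul_eq_mul_left (by omega) hkey

lemma Nperm_eq (i j : ℕ) (π : Equiv.Perm (Fin k)) :
    Nperm k π i j = ∑ m ∈ (univ : Finset (Fin k)).filter (fun m : Fin k => (m : ℕ) < i),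
      (if ((π m : ℕ) < j) then 1 else 0) := by
  rw [Nperm, Finset.card_filter, Finset.sum_filter]
  refine Finset.sum_congr rfl fun m _ => ?_
  by_cases h1 : (m : ℕ) < i <;> by_cases h2 : (π m : ℕ) < j <;> simp [h1, h2]

lemma sum_Nperm (i j : ℕ) (hk : 2 ≤ k) (hi : i ≤ k) (hj : j ≤ k) :
    (∑ π : Equiv.Perm (Fin k), Nperm k π i j) = i * (j * (k - 1)!) := by
  classical
  simp only [Nperm_eq i j]
  rw [Finset.sum_comm]
  rw [Finset.sum_congr rfl fun m _ => sum_ind_one j (by omega) hj m]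
  rw [Finset.sum_const, card_val_lt k i hi, smul_eq_mul]

lemma sum_Nperm_sq (i j : ℕ) (hk : 2 ≤ k) (hi : i ≤ k) (hj : j ≤ k) :
    (∑ π : Equiv.Perm (Fin k), (Nperm k π i j) ^ 2)
      = i * (j * (k - 1)!) + i * (i - 1) * (j * (j - 1) * (k - 2)!) := by
  classical
  set A : Finset (Fin k) := (univ : Finset (Fin k)).filter (fun m : Fin k => (m : ℕ) < i) with hA
  have hAcard : A.card = i := card_val_lt k i hi
  have hsq : ∀ π : Equiv.Perm (Fin k), (Nperm k π i j) ^ 2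
      = ∑ m ∈ A, ∑ m' ∈ A, (if ((π m : ℕ) < j ∧ (π m' : ℕ) < j) then 1 else 0) := by
    intro π
    rw [sq, Nperm_eq i j, Finset.sum_mul_sum]
    refine Finset.sum_congr rfl fun m _ => Finset.sum_congr rfl fun m' _ => ?_
    by_cases h1 : (π m : ℕ) < j <;> by_cases h2 : (π m' : ℕ) < j <;> simp [h1, h2]
  simp only [hsq]
  rw [Finset.sum_comm]
  have hinner : ∀ m ∈ A, (∑ π : Equiv.Perm (Fin k), ∑ m' ∈ A,
      (if ((π m : ℕ) < j ∧ (π m' : ℕ) < j) then 1 else 0))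
        = j * (k - 1)! + (i - 1) * (j * (j - 1) * (k - 2)!) := by
    intro m hm
    rw [Finset.sum_comm]
    have hsplit : ∀ f : Fin k → ℕ, (∑ m' ∈ A.erase m, f m') + f m = ∑ m' ∈ A, f m' :=
      fun f => Finset.sum_erase_add A f hm
    rw [← hsplit (fun m' => ∑ π : Equiv.Perm (Fin k),
      (if ((π m : ℕ) < j ∧ (π m' : ℕ) < j) then 1 else 0))]
    have hdiag : (∑ π : Equiv.Perm (Fin k),
        (if ((π m : ℕ) < j ∧ (π m : ℕ) < j) then 1 else 0)) = j * (k - 1)! := by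
      have hss : ∀ π : Equiv.Perm (Fin k),
          (if ((π m : ℕ) < j ∧ (π m : ℕ) < j) then (1 : ℕ) else 0)
            = if ((π m : ℕ) < j) then 1 else 0 := by intro π; simp
      rw [Finset.sum_congr rfl fun π _ => hss π]
      exact sum_ind_one j (by omega) hj m
    have hoff : ∀ m' ∈ A.erase m, (∑ π : Equiv.Perm (Fin k),
        (if ((π m : ℕ) < j ∧ (π m' : ℕ) < j) then 1 else 0))
          = j * (j - 1) * (k - 2)! := by
      intro m' hm'
      exact sum_ind_two j hk hj m m' (Finset.mem_erase.mp hm').1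
    rw [Finset.sum_congr rfl hoff, hdiag, Finset.sum_const, smul_eq_mul,
      Finset.card_erase_of_mem hm, hAcard]
    ring
  rw [Finset.sum_congr rfl hinner, Finset.sum_const, hAcard, smul_eq_mul]
  ring

lemma cast_mul_pred (n : ℕ) : ((n * (n - 1) : ℕ) : ℝ) = (n : ℝ) * ((n : ℝ) - 1) := by
  cases n with
  | zero => simp
  | succ m => push_cast [Nat.succ_sub_one]; ring

end Counting

/-- For `u = i/k`, `v = j/k`, the variance of `X_k(u,v)` (uniform over all `k!`
permutations) equals `uv(1−u)(1−v)/(k−1)`. -/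
theorem stmt_5 (k i j : ℕ) (hk : 2 ≤ k) (hi : i ≤ k) (hj : j ≤ k)
    (u v : ℝ) (hu : u = (i : ℝ) / k) (hv : v = (j : ℝ) / k) :
    (1 / (k ! : ℝ)) * (∑ π : Equiv.Perm (Fin k), ((Nperm k π i j : ℝ) / k) ^ 2) -
        ((1 / (k ! : ℝ)) * ∑ π : Equiv.Perm (Fin k), (Nperm k π i j : ℝ) / k) ^ 2 =
      u * v * (1 - u) * (1 - v) / ((k : ℝ) - 1) := by
  have hk1 : 1 ≤ k := by omega
  have hK0 : (k : ℝ) ≠ 0 := Nat.cast_ne_zero.mpr (by omega)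
  have hK2 : (2 : ℝ) ≤ (k : ℝ) := by exact_mod_cast hk
  have hK1 : (k : ℝ) - 1 ≠ 0 := by nlinarith
  have hF : ((k - 2)! : ℝ) ≠ 0 := Nat.cast_ne_zero.mpr (Nat.factorial_ne_zero _)
  have hfac1 : (((k - 1)! : ℕ) : ℝ) = ((k : ℝ) - 1) * (((k - 2)! : ℕ) : ℝ) := by
    have h : (k - 1) * (k - 2)! = (k - 1)! := by
      have := Nat.mul_factorial_pred (n := k - 1) (by omega)
      simpa [Nat.sub_sub] using this
    rw [← h]
    push_cast [Nat.cast_sub hk1]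
    ring
  have hfack : ((k ! : ℕ) : ℝ) = (k : ℝ) * (((k - 1)! : ℕ) : ℝ) := by
    rw [← Nat.mul_factorial_pred (by omega : k ≠ 0)]
    push_cast
    ring
  rcases Nat.eq_zero_or_pos i with hi0 | hi1
  · subst hi0
    have hN : ∀ π : Equiv.Perm (Fin k), Nperm k π 0 j = 0 := by
      intro π; simp [Nperm]
    simp [hN, hu]
  rcases Nat.eq_zero_or_pos j with hj0 | hj1
  · subst hj0
    have hN : ∀ π : Equiv.Perm (Fin k), Nperm k π i 0 = 0 := by
      intro π; simp [Nperm]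
    simp [hN, hv]
  have ci : ((i - 1 : ℕ) : ℝ) = (i : ℝ) - 1 := by
    push_cast [Nat.cast_sub hi1]; ring
  have cj : ((j - 1 : ℕ) : ℝ) = (j : ℝ) - 1 := by
    push_cast [Nat.cast_sub hj1]; ring
  have e1 : (∑ π : Equiv.Perm (Fin k), (Nperm k π i j : ℝ) / k)
      = ((i : ℝ) * ((j : ℝ) * (((k - 1)! : ℕ) : ℝ))) / k := by
    rw [← Finset.sum_div]
    congr 1
    rw [← Nat.cast_sum, sum_Nperm i j hk hi hj]
    push_cast
    ring
  have e2 : (∑ π : Equiv.Perm (Fin k), ((Nperm k π i j : ℝ) / k) ^ 2)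
      = ((i : ℝ) * ((j : ℝ) * (((k - 1)! : ℕ) : ℝ))
          + (i : ℝ) * ((i : ℝ) - 1) * ((j : ℝ) * ((j : ℝ) - 1) * (((k - 2)! : ℕ) : ℝ)))
        / (k : ℝ) ^ 2 := by
    simp only [div_pow]
    rw [← Finset.sum_div]
    congr 1
    have : ∀ π : Equiv.Perm (Fin k), ((Nperm k π i j : ℝ)) ^ 2 = ((Nperm k π i j ^ 2 : ℕ) : ℝ) := by
      intro π; push_cast; ring
    rw [Finset.sum_congr rfl fun π _ => this π, ← Nat.cast_sum, sum_Nperm_sq i j hk hi hj]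
    push_cast [ci, cj]
    ring
  rw [e1, e2, hu, hv, hfack, hfac1]
  field_simp
  ring
end

section
/- Let k ≥ 2 be an integer, let i, j ∈ {0,1,…,k−1}, and let ℓ be an integer with max(0, i+j+1−k) ≤ ℓ, ℓ ≤ i and ℓ ≤ j−1. Then the number of permutations π of {1,…,k} with N_π(i,j) = ℓ, π(i+1) ≤ j, and π⁻¹(j+1) ≥ i+2 equals i!·j!·(k−i−1)!·(k−j−1)! / ((i−ℓ)!·(j−ℓ−1)!·(k+ℓ−i−j−1)!·ℓ!). -/
open Nat Finset

/-! For a permutation `π` of `Fin k`, let `A` be the set of positions `m < i` with `π m < j`, so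
`#A = ℓ`. Given `A`, the two remaining conditions say exactly that the `ℓ + 1` positions of
`A ∪ {i}` are sent below `j` and the other `i - ℓ` positions below `i` are sent above `j`: the
value `j` can then only be taken after position `i`. Choosing `A`, the images of the two blocks
(injectively, into disjoint value sets) and then any bijection between the `k - i - 1` remaining
positions and values gives `C(i, ℓ) · j^(ℓ+1) · (k-j-1)^(i-ℓ) · (k-i-1)!` with falling powers,
which is the stated quotient of factorials. -/

theorem Function.Embedding.card_sum_mapsTo {α β γ : Type*} [Fintype α] [DecidableEq α]
    [Fintype β] [Fintype γ] {t₁ t₂ : Finset α} (ht : Disjoint t₁ t₂) :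
    #{f : β ⊕ γ ↪ α | (∀ b, f (.inl b) ∈ t₁) ∧ ∀ c, f (.inr c) ∈ t₂} =
      (#t₁).descFactorial (Fintype.card β) * (#t₂).descFactorial (Fintype.card γ) := by
  let e : {f : β ⊕ γ ↪ α // (∀ b, f (.inl b) ∈ t₁) ∧ ∀ c, f (.inr c) ∈ t₂} ≃
      (β ↪ t₁) × (γ ↪ t₂) :=
    { toFun := fun f =>
        (⟨fun b => ⟨f.1 (.inl b), f.2.1 b⟩,
          fun _ _ h => Sum.inl_injective (f.1.injective (congrArg Subtype.val h))⟩,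
         ⟨fun c => ⟨f.1 (.inr c), f.2.2 c⟩,
          fun _ _ h => Sum.inr_injective (f.1.injective (congrArg Subtype.val h))⟩)
      invFun := fun g =>
        ⟨⟨Sum.elim (fun b => g.1 b) (fun c => g.2 c),
          (Subtype.val_injective.comp g.1.injective).sumElim
            (Subtype.val_injective.comp g.2.injective)
            fun b c => disjoint_iff_ne.mp ht _ (g.1 b).2 _ (g.2 c).2⟩,
          fun b => (g.1 b).2, fun c => (g.2 c).2⟩
      left_inv := fun f => by ext (b | c) <;> rfl
      right_inv := fun g => by ext <;> rfl }
  rw [← Fintype.card_subtype, Fintype.card_congr e, Fintype.card_prod, Fintype.card_embedding_eq,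
    Fintype.card_embedding_eq, Fintype.card_coe, Fintype.card_coe]

namespace Equiv.Perm

section

variable {α β : Type*} [Fintype α] [DecidableEq α] [Fintype β]

theorem card_fixing_range (ι : β ↪ α) :
    #{τ : Perm α | ∀ b, τ (ι b) = ι b} = (Fintype.card α - Fintype.card β)! := by
  have hfix (τ : Perm α) : (∀ b, τ (ι b) = ι b) ↔ ∀ a, ¬a ∉ Set.range ι → τ a = a := by
    simp
  simp_rw [hfix]
  rw [← Fintype.card_subtype, ← Fintype.card_congr (Perm.subtypeEquivSubtypePerm _),
    Fintype.card_perm, Fintype.card_subtype_compl, Set.card_range_of_injective ι.injective]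

theorem card_extending (ι f : β ↪ α) :
    #{π : Perm α | ∀ b, π (ι b) = f b} = (Fintype.card α - Fintype.card β)! := by
  obtain ⟨σ, hσ⟩ := exists_extending_pair ι f ι.injective f.injective
  rw [← card_fixing_range ι]
  refine card_nbij' (σ⁻¹ * ·) (σ * ·) ?_ ?_ (fun _ _ => by simp) (fun _ _ => by simp)
  · intro π hπ
    simp_all [← hσ]
  · intro τ hτ
    simp_all

theorem card_filter_restrict (ι : β ↪ α) (P : (β ↪ α) → Prop) [DecidablePred P] :
    #{π : Perm α | P (ι.trans π.toEmbedding)} =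
      #{f : β ↪ α | P f} * (Fintype.card α - Fintype.card β)! := by
  rw [card_eq_sum_card_fiberwise (f := fun π : Perm α => ι.trans π.toEmbedding)
    (t := {f | P f}) (fun π hπ => by simpa using hπ), ← smul_eq_mul, ← sum_const]
  refine sum_congr rfl fun f hf => ?_
  rw [← card_extending ι f]
  congr 1
  ext π
  simp only [mem_filter, mem_univ, true_and] at hf ⊢
  constructor
  · rintro ⟨-, rfl⟩ b
    rfl
  · intro h
    have hπ : ι.trans π.toEmbedding = f := by
      ext b
      exact h b
    exact ⟨hπ ▸ hf, hπ⟩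

theorem card_mapsTo_mapsTo {b₁ b₂ t₁ t₂ : Finset α} (hb : _root_.Disjoint b₁ b₂)
    (ht : _root_.Disjoint t₁ t₂) :
    #{π : Perm α | (∀ x ∈ b₁, π x ∈ t₁) ∧ ∀ x ∈ b₂, π x ∈ t₂} =
      (#t₁).descFactorial #b₁ * (#t₂).descFactorial #b₂ * (Fintype.card α - #b₁ - #b₂)! := by
  let ι : b₁ ⊕ b₂ ↪ α := ⟨Sum.elim Subtype.val Subtype.val,
    Subtype.val_injective.sumElim Subtype.val_injective fun x y =>
      disjoint_iff_ne.mp hb _ x.2 _ y.2⟩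
  have h := card_filter_restrict ι fun f => (∀ x, f (.inl x) ∈ t₁) ∧ ∀ y, f (.inr y) ∈ t₂
  rw [Function.Embedding.card_sum_mapsTo ht, Fintype.card_sum, Fintype.card_coe,
    Fintype.card_coe, ← Nat.sub_sub] at h
  rw [← h]
  simp [ι]

end

theorem filter_lt_eq_and_iff_mapsTo {α : Type*} [DecidableEq α] [LinearOrder α]
    [LocallyFiniteOrderBot α] [LocallyFiniteOrderTop α] (a b : α) {A : Finset α}
    (hA : A ⊆ Iio a) (π : Perm α) :
    ({m ∈ Iio a | π m < b} = A ∧ π a < b ∧ a < π⁻¹ b) ↔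
      (∀ x ∈ insert a A, π x ∈ Iio b) ∧ ∀ x ∈ Iio a \ A, π x ∈ Ioi b := by
  simp only [mem_insert, forall_eq_or_imp, mem_Iio, mem_sdiff, mem_Ioi, and_imp]
  constructor
  · rintro ⟨rfl, hab, hb⟩
    refine ⟨⟨hab, fun x hx => (mem_filter.mp hx).2⟩, fun x hxa hx => ?_⟩
    have hne : π x ≠ b := fun h => hxa.not_gt (by simpa [← h] using hb)
    exact lt_of_le_of_ne (not_lt.mp fun h => hx (mem_filter.mpr ⟨mem_Iio.mpr hxa, h⟩)) hne.symm
  · rintro ⟨⟨hab, hA₁⟩, hA₂⟩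
    refine ⟨?_, hab, ?_⟩
    · ext m
      simp only [mem_filter, mem_Iio]
      refine ⟨fun ⟨hma, hmb⟩ => ?_, fun hm => ⟨mem_Iio.mp (hA hm), hA₁ m hm⟩⟩
      by_contra hm
      exact (hA₂ m hma hm).not_gt hmb
    · by_contra! h
      rcases h.lt_or_eq with h | h
      · by_cases hm : π⁻¹ b ∈ A
        · simpa using hA₁ _ hm
        · simpa using hA₂ _ h hm
      · simp [← h] at hab

theorem card_filter_lt_eq_and {α : Type*} [Fintype α] [DecidableEq α] [LinearOrder α]
    [LocallyFiniteOrderBot α] [LocallyFiniteOrderTop α] (a b : α) (ℓ : ℕ) :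
    #{π : Perm α | #{m ∈ Iio a | π m < b} = ℓ ∧ π a < b ∧ a < π⁻¹ b} =
      (#(Iio a)).choose ℓ * ((#(Iio b)).descFactorial (ℓ + 1) *
        (#(Ioi b)).descFactorial (#(Iio a) - ℓ) * (Fintype.card α - #(Iio a) - 1)!) := by
  rw [card_eq_sum_card_fiberwise (f := fun π : Perm α => {m ∈ Iio a | π m < b})
    (t := powersetCard ℓ (Iio a)) (fun π hπ => ?_), ← card_powersetCard, ← smul_eq_mul,
    ← sum_const]
  · refine sum_congr rfl fun A hA => ?_
    obtain ⟨hAa, rfl⟩ := mem_powersetCard.mp hA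
    have haA : a ∉ A := fun h => by simpa using hAa h
    have hdisj : _root_.Disjoint (Iio b) (Ioi b) :=
      disjoint_left.mpr fun x hxb hbx => (mem_Iio.mp hxb).not_gt (mem_Ioi.mp hbx)
    have hcount := card_mapsTo_mapsTo (b₁ := insert a A) (b₂ := Iio a \ A)
      (disjoint_insert_left.mpr ⟨by simp, disjoint_sdiff⟩) hdisj
    have hAcard := card_le_card hAa
    rw [card_insert_of_notMem haA, card_sdiff_of_subset hAa,
      show Fintype.card α - (#A + 1) - (#(Iio a) - #A) = Fintype.card α - #(Iio a) - 1 by omega]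
      at hcount
    rw [filter_filter, ← hcount]
    congr 1
    ext π
    simp only [mem_filter, mem_univ, true_and, ← filter_lt_eq_and_iff_mapsTo a b hAa π]
    exact ⟨fun ⟨⟨_, h⟩, hA⟩ => ⟨hA, h⟩, fun ⟨hA, h⟩ => ⟨⟨hA ▸ rfl, h⟩, hA⟩⟩
  · exact mem_powersetCard.mpr ⟨filter_subset _ _, (mem_filter.mp hπ).2.1⟩

end Equiv.Perm

theorem Nperm_eq_card_filter_Iio {k i j : ℕ} (hik : i < k) (hjk : j < k)
    (π : Equiv.Perm (Fin k)) :
    Nperm k π i j = #{m ∈ Iio (⟨i, hik⟩ : Fin k) | π m < ⟨j, hjk⟩} := by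
  rw [Nperm]
  congr 1
  ext m
  simp [Fin.lt_def]

theorem cast_choose_mul_descFactorial_mul_descFactorial_mul_factorial {k i j ℓ : ℕ}
    (hℓ1 : i + j + 1 ≤ k + ℓ) (hℓ2 : ℓ ≤ i) (hℓ3 : ℓ + 1 ≤ j) :
    ((i.choose ℓ * (j.descFactorial (ℓ + 1) * (k - 1 - j).descFactorial (i - ℓ) *
        (k - i - 1)!) : ℕ) : ℝ) =
      ((i ! : ℝ) * (j !) * ((k - i - 1)!) * ((k - j - 1)!)) /
        (((i - ℓ)! : ℝ) * ((j - ℓ - 1)!) * ((k + ℓ - i - j - 1)!) * (ℓ !)) := by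
  have hi := choose_mul_factorial_mul_factorial hℓ2
  have hj := factorial_mul_descFactorial hℓ3
  have hk := factorial_mul_descFactorial (show i - ℓ ≤ k - 1 - j by omega)
  rw [show j - (ℓ + 1) = j - ℓ - 1 by omega] at hj
  rw [show k - 1 - j - (i - ℓ) = k + ℓ - i - j - 1 by omega] at hk
  rw [show k - 1 - j = k - j - 1 by omega] at hk ⊢
  rw [eq_div_iff (by positivity), ← hi, ← hj, ← hk]
  push_cast
  ring

/-- On `Fin k` the conditions `π(i+1) ≤ j` and `π⁻¹(j+1) ≥ i+2` read `π i < j` and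
`π⁻¹ j ≥ i+1`. -/
theorem stmt_7_general (k i j ℓ : ℕ) (hik : i < k) (hjk : j < k)
    (hℓ1 : i + j + 1 ≤ k + ℓ) (hℓ2 : ℓ ≤ i) (hℓ3 : ℓ + 1 ≤ j) :
    ((Finset.univ.filter fun π : Equiv.Perm (Fin k) =>
        Nperm k π i j = ℓ ∧ ((π ⟨i, hik⟩ : ℕ) < j) ∧ (i + 1 ≤ (π.symm ⟨j, hjk⟩ : ℕ))).card : ℝ) =
      ((i ! : ℝ) * (j !) * ((k - i - 1)!) * ((k - j - 1)!)) /
        (((i - ℓ)! : ℝ) * ((j - ℓ - 1)!) * ((k + ℓ - i - j - 1)!) * (ℓ !)) := by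
  have hcount := Equiv.Perm.card_filter_lt_eq_and (⟨i, hik⟩ : Fin k) ⟨j, hjk⟩ ℓ
  simp only [Fin.card_Iio, Fin.card_Ioi, Fintype.card_fin] at hcount
  rw [← cast_choose_mul_descFactorial_mul_descFactorial_mul_factorial hℓ1 hℓ2 hℓ3, ← hcount]
  congr 2
  ext π
  simp only [mem_filter, mem_univ, true_and, Nperm_eq_card_filter_Iio hik hjk]
  rfl

/-- Count of permutations `π` of `{1,…,k}` with `N_π(i,j) = ℓ`, `π(i+1) ≤ j` and
`π⁻¹(j+1) ≥ i+2` (0-indexed: `π(i) < j` and `π⁻¹(j) ≥ i+1` on `Fin k`). -/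
theorem stmt_7 (k i j ℓ : ℕ) (hk : 2 ≤ k) (hik : i < k) (hjk : j < k)
    (hℓ1 : i + j + 1 ≤ k + ℓ) (hℓ2 : ℓ ≤ i) (hℓ3 : ℓ + 1 ≤ j) :
    ((Finset.univ.filter fun π : Equiv.Perm (Fin k) =>
        Nperm k π i j = ℓ ∧ ((π ⟨i, hik⟩ : ℕ) < j) ∧ (i + 1 ≤ (π.symm ⟨j, hjk⟩ : ℕ))).card : ℝ) =
      ((i ! : ℝ) * (j !) * ((k - i - 1)!) * ((k - j - 1)!)) /
        (((i - ℓ)! : ℝ) * ((j - ℓ - 1)!) * ((k + ℓ - i - j - 1)!) * (ℓ !)) :=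
  stmt_7_general k i j ℓ hik hjk hℓ1 hℓ2 hℓ3
end

section
/- Let k ≥ 2 be an integer, let i, j ∈ {0,1,…,k−1}, and let ℓ be an integer with max(0, i+j+1−k) ≤ ℓ, ℓ ≤ i−1 and ℓ ≤ j. Then the number of permutations π of {1,…,k} with N_π(i,j) = ℓ, π(i+1) ≥ j+2, and π⁻¹(j+1) ≤ i equals i!·j!·(k−i−1)!·(k−j−1)! / ((i−ℓ−1)!·(j−ℓ)!·(k+ℓ−i−j−1)!·ℓ!). -/
open Nat Finset

section AuxCounting

variable {α : Type*} [Fintype α] [DecidableEq α]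

/-- Number of functions that are injective on `s`, map `s` into `t`, and agree with `b` off `s`. -/
lemma card_injfun (s t : Finset α) (b : α → α) :
    (Finset.univ.filter fun f : α → α =>
      Set.InjOn f ↑s ∧ (∀ x ∈ s, f x ∈ t) ∧ (∀ x ∉ s, f x = b x)).card
      = t.card.descFactorial s.card := by
  classical
  have h := Fintype.card_embedding_eq (α := ↥s) (β := ↥t)
  rw [Fintype.card_coe, Fintype.card_coe] at h
  rw [← h, ← Finset.card_univ]
  refine Finset.card_bij'
    (fun f hf => (⟨fun x => ⟨f x, (Finset.mem_filter.1 hf).2.2.1 x x.2⟩,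
      fun x y hxy => Subtype.ext ((Finset.mem_filter.1 hf).2.1 x.2 y.2 (Subtype.ext_iff.1 hxy))⟩ :
        ↥s ↪ ↥t))
    (fun e _ => fun x => if hx : x ∈ s then (e ⟨x, hx⟩ : α) else b x) ?_ ?_ ?_ ?_
  · intro f hf
    exact Finset.mem_univ _
  · intro e he
    rw [Finset.mem_filter]
    refine ⟨Finset.mem_univ _, ?_, ?_, ?_⟩
    · intro x hx y hy hxy
      simp only [Finset.mem_coe] at hx hy
      simp only [dif_pos hx, dif_pos hy] at hxy
      have := e.injective (Subtype.ext hxy)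
      exact congrArg Subtype.val this
    · intro x hx
      simp only [dif_pos hx]; exact (e ⟨x, hx⟩).2
    · intro x hx
      simp only [dif_neg hx]
  · intro f hf
    funext x
    by_cases hx : x ∈ s
    · simp [dif_pos hx]; rfl
    · simp only [dif_neg hx]
      exact ((Finset.mem_filter.1 hf).2.2.2 x hx).symm
  · intro e he
    ext x
    simp

/-- Any injection defined on a finset extends to a permutation. -/
lemma exists_perm_extend (s : Finset α) (f : α → α) (hf : Set.InjOn f ↑s) :
    ∃ σ : Equiv.Perm α, ∀ x ∈ s, σ x = f x := by
  classical
  set u := s.image f with hu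
  have hcard : u.card = s.card := Finset.card_image_of_injOn hf
  have hbij : Function.Bijective (fun x : ↥s => (⟨f x, Finset.mem_image_of_mem f x.2⟩ : ↥u)) := by
    constructor
    · intro x y hxy
      exact Subtype.ext (hf x.2 y.2 (Subtype.ext_iff.1 hxy))
    · intro y
      obtain ⟨x, hx, hfx⟩ := Finset.mem_image.1 y.2
      exact ⟨⟨x, hx⟩, Subtype.ext hfx⟩
  have hcc : Fintype.card {x // ¬ x ∈ s} = Fintype.card {x // ¬ x ∈ u} := by
    rw [Fintype.card_subtype_compl, Fintype.card_subtype_compl, Fintype.card_coe,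
      Fintype.card_coe, hcard]
  obtain ⟨e₂⟩ : Nonempty ({x // ¬ x ∈ s} ≃ {x // ¬ x ∈ u}) := ⟨Fintype.equivOfCardEq hcc⟩
  refine ⟨(Equiv.sumCompl (· ∈ s)).symm.trans (((Equiv.ofBijective _ hbij).sumCongr e₂).trans
    (Equiv.sumCompl (· ∈ u))), fun x hx => ?_⟩
  simp [Equiv.sumCompl_symm_apply_of_pos hx]

/-- Number of permutations extending a given permutation on `s`. -/
lemma card_perm_extends (s : Finset α) (σ₀ : Equiv.Perm α) :
    (Finset.univ.filter fun σ : Equiv.Perm α => ∀ x ∈ s, σ x = σ₀ x).card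
      = (Fintype.card α - s.card)! := by
  classical
  have step1 : (Finset.univ.filter fun σ : Equiv.Perm α => ∀ x ∈ s, σ x = σ₀ x).card
      = (Finset.univ.filter fun τ : Equiv.Perm α => ∀ x ∈ s, τ x = x).card := by
    refine Finset.card_bij' (fun σ _ => σ₀⁻¹ * σ) (fun τ _ => σ₀ * τ) ?_ ?_ ?_ ?_
    · intro σ hσ
      simp only [Finset.mem_filter, Finset.mem_univ, true_and] at hσ ⊢
      intro x hx
      rw [Equiv.Perm.mul_apply, hσ x hx, Equiv.Perm.inv_def, Equiv.symm_apply_apply]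
    · intro τ hτ
      simp only [Finset.mem_filter, Finset.mem_univ, true_and] at hτ ⊢
      intro x hx
      rw [Equiv.Perm.mul_apply, hτ x hx]
    · intro σ _; group
    · intro τ _; group
  rw [step1]
  have e : {f : Equiv.Perm α // ∀ x ∈ s, f x = x} ≃ Equiv.Perm {x // ¬ x ∈ s} := by
    refine (Equiv.subtypeEquivRight fun f => ?_).trans
      (Equiv.Perm.subtypeEquivSubtypePerm (fun x => ¬ x ∈ s)).symm
    constructor
    · intro h a ha; exact h a (not_not.1 ha)
    · intro h a ha; exact h a (not_not.2 ha)
  have hc := Fintype.card_congr e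
  rw [Fintype.card_subtype] at hc
  rw [hc, Fintype.card_perm, Fintype.card_subtype_compl, Fintype.card_coe]

/-- Cardinality of an initial segment of `Fin k`. -/
lemma card_filter_val_lt {k : ℕ} (c : ℕ) (hc : c ≤ k) :
    ((Finset.univ : Finset (Fin k)).filter fun m : Fin k => (m : ℕ) < c).card = c := by
  have h : ((Finset.univ : Finset (Fin k)).filter fun m : Fin k => (m : ℕ) < c).card
      = (Finset.range c).card := by
    refine Finset.card_bij' (fun m _ => (m : ℕ))
      (fun n hn => (⟨n, lt_of_lt_of_le (Finset.mem_range.1 hn) hc⟩ : Fin k)) ?_ ?_ ?_ ?_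
    · intro m hm
      exact Finset.mem_range.2 (Finset.mem_filter.1 hm).2
    · intro n hn
      exact Finset.mem_filter.2 ⟨Finset.mem_univ _, Finset.mem_range.1 hn⟩
    · intro m _; rfl
    · intro n _; rfl
  rw [h, Finset.card_range]

lemma card_filter_val_gt {k : ℕ} (c : ℕ) (hc : c < k) :
    ((Finset.univ : Finset (Fin k)).filter fun m : Fin k => c < (m : ℕ)).card = k - c - 1 := by
  have h := Finset.card_filter_add_card_filter_not
    (s := (Finset.univ : Finset (Fin k))) (p := fun m : Fin k => (m : ℕ) < c + 1)
  rw [card_filter_val_lt (c + 1) hc] at h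
  have heq : ((Finset.univ : Finset (Fin k)).filter fun m : Fin k => ¬ (m : ℕ) < c + 1)
      = ((Finset.univ : Finset (Fin k)).filter fun m : Fin k => c < (m : ℕ)) := by
    apply Finset.filter_congr
    intro m _
    constructor
    · intro h'; omega
    · intro h'; omega
  rw [heq] at h
  rw [Finset.card_univ, Fintype.card_fin] at h
  omega

/-- Counting functions prescribed off `s₁ ∪ {p} ∪ s₂`, injective from `s₁` into `t₁` and from
`s₂` into `t₂`, sending `p` to `v`. -/
lemma card_injfun_two (s₁ s₂ t₁ t₂ : Finset α) (p : α) (v : α) (b : α → α)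
    (hp1 : p ∉ s₁) (hp2 : p ∉ s₂) (hs : ∀ x ∈ s₁, x ∉ s₂) :
    (Finset.univ.filter fun g : α → α => Set.InjOn g ↑s₁ ∧ (∀ x ∈ s₁, g x ∈ t₁) ∧ g p = v ∧
      Set.InjOn g ↑s₂ ∧ (∀ x ∈ s₂, g x ∈ t₂) ∧
      (∀ x, x ∉ s₁ → x ≠ p → x ∉ s₂ → g x = b x)).card
    = t₁.card.descFactorial s₁.card * t₂.card.descFactorial s₂.card := by
  classical
  have hmaps : ∀ g ∈ (Finset.univ.filter fun g : α → α =>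
      Set.InjOn g ↑s₁ ∧ (∀ x ∈ s₁, g x ∈ t₁) ∧ g p = v ∧
      Set.InjOn g ↑s₂ ∧ (∀ x ∈ s₂, g x ∈ t₂) ∧
      (∀ x, x ∉ s₁ → x ≠ p → x ∉ s₂ → g x = b x)),
      (fun x => if x ∈ s₁ then g x else x) ∈ (Finset.univ.filter fun r : α → α =>
        Set.InjOn r ↑s₁ ∧ (∀ x ∈ s₁, r x ∈ t₁) ∧ (∀ x ∉ s₁, r x = x)) := by
    intro g hg
    obtain ⟨hinj1, ht1, -, -, -, -⟩ := (Finset.mem_filter.1 hg).2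
    refine Finset.mem_filter.2 ⟨Finset.mem_univ _, ?_, ?_, ?_⟩
    · intro x hx y hy hxy
      simp only [Finset.mem_coe] at hx hy
      simp only [if_pos hx, if_pos hy] at hxy
      exact hinj1 hx hy hxy
    · intro x hx
      simp only [if_pos hx]
      exact ht1 x hx
    · intro x hx
      simp only [if_neg hx]
  rw [Finset.card_eq_sum_card_fiberwise hmaps]
  have hfib : ∀ r ∈ (Finset.univ.filter fun r : α → α =>
        Set.InjOn r ↑s₁ ∧ (∀ x ∈ s₁, r x ∈ t₁) ∧ (∀ x ∉ s₁, r x = x)),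
      ((Finset.univ.filter fun g : α → α =>
        Set.InjOn g ↑s₁ ∧ (∀ x ∈ s₁, g x ∈ t₁) ∧ g p = v ∧
        Set.InjOn g ↑s₂ ∧ (∀ x ∈ s₂, g x ∈ t₂) ∧
        (∀ x, x ∉ s₁ → x ≠ p → x ∉ s₂ → g x = b x)).filter
          fun g => (fun x => if x ∈ s₁ then g x else x) = r).card
      = t₂.card.descFactorial s₂.card := by
    intro r hr
    obtain ⟨hrinj, hrt, hroff⟩ := (Finset.mem_filter.1 hr).2
    have hset : ((Finset.univ.filter fun g : α → α =>
        Set.InjOn g ↑s₁ ∧ (∀ x ∈ s₁, g x ∈ t₁) ∧ g p = v ∧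
        Set.InjOn g ↑s₂ ∧ (∀ x ∈ s₂, g x ∈ t₂) ∧
        (∀ x, x ∉ s₁ → x ≠ p → x ∉ s₂ → g x = b x)).filter
          fun g => (fun x => if x ∈ s₁ then g x else x) = r)
        = (Finset.univ.filter fun g : α → α =>
            Set.InjOn g ↑s₂ ∧ (∀ x ∈ s₂, g x ∈ t₂) ∧
            (∀ x ∉ s₂, g x = (fun y => if y ∈ s₁ then r y else if y = p then v else b y) x)) := by
      ext g
      simp only [Finset.mem_filter, Finset.mem_univ, true_and]
      constructor
      · rintro ⟨⟨hinj1, ht1, hgp, hinj2, ht2, hoff⟩, hrs⟩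
        refine ⟨hinj2, ht2, ?_⟩
        intro x hx2
        by_cases hx1 : x ∈ s₁
        · have := congrFun hrs x
          simp only [if_pos hx1] at this ⊢
          exact this
        · by_cases hxp : x = p
          · subst hxp
            simp only [if_neg hx1, if_pos rfl]
            exact hgp
          · simp only [if_neg hx1, if_neg hxp]
            exact hoff x hx1 hxp hx2
      · rintro ⟨hinj2, ht2, hoff⟩
        have hgs1 : ∀ x ∈ s₁, g x = r x := by
          intro x hx
          have := hoff x (hs x hx)
          simpa only [if_pos hx] using this
        have hgp : g p = v := by
          have := hoff p hp2
          simpa only [if_neg hp1, if_pos rfl, ↓reduceIte] using this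
        refine ⟨⟨?_, ?_, hgp, hinj2, ht2, ?_⟩, ?_⟩
        · intro x hx y hy hxy
          simp only [Finset.mem_coe] at hx hy
          rw [hgs1 x hx, hgs1 y hy] at hxy
          exact hrinj hx hy hxy
        · intro x hx
          rw [hgs1 x hx]
          exact hrt x hx
        · intro x hx1 hxp hx2
          have := hoff x hx2
          simpa only [if_neg hx1, if_neg hxp] using this
        · funext x
          by_cases hx1 : x ∈ s₁
          · simp only [if_pos hx1]
            exact hgs1 x hx1
          · simp only [if_neg hx1]
            exact (hroff x hx1).symm
    rw [hset]
    exact card_injfun s₂ t₂ _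
  rw [Finset.sum_congr rfl hfib, Finset.sum_const, smul_eq_mul,
    card_injfun s₁ t₁ (fun x => x)]

end AuxCounting

/-- Count of permutations `π` of `{1,…,k}` with `N_π(i,j) = ℓ`, `π(i+1) ≥ j+2` and
`π⁻¹(j+1) ≤ i` (0-indexed: `π(i) ≥ j+1` and `π⁻¹(j) < i` on `Fin k`). -/
theorem stmt_8 (k i j ℓ : ℕ) (hk : 2 ≤ k) (hik : i < k) (hjk : j < k)
    (hℓ1 : i + j + 1 ≤ k + ℓ) (hℓ2 : ℓ + 1 ≤ i) (hℓ3 : ℓ ≤ j) :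
    ((Finset.univ.filter fun π : Equiv.Perm (Fin k) =>
        Nperm k π i j = ℓ ∧ (j + 1 ≤ (π ⟨i, hik⟩ : ℕ)) ∧ ((π.symm ⟨j, hjk⟩ : ℕ) < i)).card : ℝ) =
      ((i ! : ℝ) * (j !) * ((k - i - 1)!) * ((k - j - 1)!)) /
        (((i - ℓ - 1)! : ℝ) * ((j - ℓ)!) * ((k + ℓ - i - j - 1)!) * (ℓ !)) := by
  have hik1 : i + 1 ≤ k := hik
  set jF : Fin k := ⟨j, hjk⟩ with hjFdef
  set iF : Fin k := ⟨i, hik⟩ with hiFdef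
  set T : Finset (Equiv.Perm (Fin k)) := Finset.univ.filter fun π : Equiv.Perm (Fin k) =>
    Nperm k π i j = ℓ ∧ (j + 1 ≤ (π iF : ℕ)) ∧ ((π.symm jF : ℕ) < i) with hTdef
  set P : Finset (Fin k) := Finset.univ.filter (fun m : Fin k => (m : ℕ) < i + 1) with hPdef
  set Plt : Finset (Fin k) := Finset.univ.filter (fun m : Fin k => (m : ℕ) < i) with hPltdef
  set tIio : Finset (Fin k) := Finset.univ.filter (fun v : Fin k => (v : ℕ) < j) with htIiodef
  set tIoi : Finset (Fin k) := Finset.univ.filter (fun v : Fin k => j < (v : ℕ)) with htIoidef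
  have hPcard : P.card = i + 1 := card_filter_val_lt (i + 1) hik1
  have hPltcard : Plt.card = i := card_filter_val_lt i (le_of_lt hik)
  have htIiocard : tIio.card = j := card_filter_val_lt j (le_of_lt hjk)
  have htIoicard : tIoi.card = k - j - 1 := card_filter_val_gt j hjk
  have hmemP : ∀ m : Fin k, m ∈ P ↔ (m : ℕ) < i + 1 := fun m => by
    simp [hPdef]
  have hmemPlt : ∀ m : Fin k, m ∈ Plt ↔ (m : ℕ) < i := fun m => by
    simp [hPltdef]
  have hmemIio : ∀ v : Fin k, v ∈ tIio ↔ (v : ℕ) < j := fun v => by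
    simp [htIiodef]
  have hmemIoi : ∀ v : Fin k, v ∈ tIoi ↔ j < (v : ℕ) := fun v => by
    simp [htIoidef]
  have hPltP : Plt ⊆ P := fun m hm => (hmemP m).2 (by have := (hmemPlt m).1 hm; omega)
  have hiFP : iF ∈ P := (hmemP iF).2 (by simp [hiFdef])
  have hiFval : (iF : ℕ) = i := rfl
  have hjFval : (jF : ℕ) = j := rfl
  -- The set of restrictions to `P` of permutations in `T`
  set G : Finset (Fin k → Fin k) := Finset.univ.filter (fun g : Fin k → Fin k =>
    Set.InjOn g ↑P ∧
    (Finset.univ.filter fun m : Fin k => (m : ℕ) < i ∧ ((g m : ℕ) < j)).card = ℓ ∧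
    j + 1 ≤ (g iF : ℕ) ∧
    (∃ m : Fin k, (m : ℕ) < i ∧ g m = jF) ∧
    (∀ x : Fin k, x ∉ P → g x = x)) with hGdef
  -- Stage 1 : T.card = G.card * (k-i-1)!
  have hmaps1 : ∀ σ ∈ T, (fun x => if x ∈ P then σ x else x) ∈ G := by
    intro σ hσ
    obtain ⟨hN, hiv, hsym⟩ := (Finset.mem_filter.1 hσ).2
    refine Finset.mem_filter.2 ⟨Finset.mem_univ _, ?_, ?_, ?_, ?_, ?_⟩
    · intro x hx y hy hxy
      simp only [Finset.mem_coe] at hx hy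
      simp only [if_pos hx, if_pos hy] at hxy
      exact σ.injective hxy
    · have heq : (Finset.univ.filter fun m : Fin k =>
          (m : ℕ) < i ∧ (((if m ∈ P then σ m else m) : Fin k) : ℕ) < j)
          = (Finset.univ.filter fun m : Fin k => (m : ℕ) < i ∧ ((σ m : ℕ) < j)) := by
        apply Finset.filter_congr
        intro m _
        by_cases hmi : (m : ℕ) < i
        · have hmP : m ∈ P := (hmemP m).2 (by omega)
          simp [hmP]
        · simp [hmi]
      rw [heq]
      exact hN
    · simp only [if_pos hiFP]
      exact hiv
    · refine ⟨σ.symm jF, hsym, ?_⟩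
      have hmem : σ.symm jF ∈ P := (hmemP _).2 (by omega)
      simp only [if_pos hmem]
      exact σ.apply_symm_apply jF
    · intro x hx
      simp only [if_neg hx]
  have hfib1 : ∀ g ∈ G, (T.filter fun σ => (fun x => if x ∈ P then σ x else x) = g).card
      = (k - i - 1)! := by
    intro g hg
    obtain ⟨hinj, hcard, hiv, ⟨m₀, hm₀i, hm₀⟩, hoff⟩ := (Finset.mem_filter.1 hg).2
    obtain ⟨σ₀, hσ₀⟩ := exists_perm_extend P g hinj
    have hset : (T.filter fun σ => (fun x => if x ∈ P then σ x else x) = g)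
        = Finset.univ.filter (fun σ : Equiv.Perm (Fin k) => ∀ x ∈ P, σ x = σ₀ x) := by
      ext σ
      simp only [hTdef, Finset.mem_filter, Finset.mem_univ, true_and]
      constructor
      · rintro ⟨-, hrs⟩
        intro x hx
        have hx' := congrFun hrs x
        simp only [if_pos hx] at hx'
        rw [hx', hσ₀ x hx]
      · intro hagree
        have hgx : ∀ x ∈ P, σ x = g x := fun x hx => by rw [hagree x hx, hσ₀ x hx]
        refine ⟨⟨?_, ?_, ?_⟩, ?_⟩
        · unfold Nperm
          have heq : (Finset.univ.filter fun m : Fin k => (m : ℕ) < i ∧ ((σ m : ℕ) < j))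
              = (Finset.univ.filter fun m : Fin k => (m : ℕ) < i ∧ ((g m : ℕ) < j)) := by
            apply Finset.filter_congr
            intro m _
            by_cases hmi : (m : ℕ) < i
            · have hmP : m ∈ P := (hmemP m).2 (by omega)
              rw [hgx m hmP]
            · simp [hmi]
          rw [heq]
          exact hcard
        · rw [hgx iF hiFP]
          exact hiv
        · have h1 : σ m₀ = jF := by
            rw [hgx m₀ ((hmemP m₀).2 (by omega))]
            exact hm₀
          have h2 : σ.symm jF = m₀ := by rw [← h1, Equiv.symm_apply_apply]
          rw [h2]
          exact hm₀i
        · funext x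
          by_cases hx : x ∈ P
          · simp only [if_pos hx]
            exact hgx x hx
          · simp only [if_neg hx]
            exact (hoff x hx).symm
    rw [hset]
    have h := card_perm_extends P σ₀
    rw [Fintype.card_fin, hPcard, show k - (i + 1) = k - i - 1 by omega] at h
    convert h using 2
    ext σ
    simp [Finset.mem_filter]
  have stage1 : T.card = G.card * (k - i - 1)! := by
    rw [Finset.card_eq_sum_card_fiberwise hmaps1, Finset.sum_congr rfl hfib1,
      Finset.sum_const, smul_eq_mul]
  -- Stage 2 : G.card
  set I : Finset (Finset (Fin k) × Fin k) :=
    (Finset.powersetCard ℓ Plt).biUnion (fun S => {S} ×ˢ (Plt \ S)) with hIdef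
  have hImem : ∀ q : Finset (Fin k) × Fin k,
      q ∈ I ↔ (q.1 ∈ Finset.powersetCard ℓ Plt ∧ q.2 ∈ Plt \ q.1) := by
    intro q
    simp only [hIdef, Finset.mem_biUnion, Finset.mem_product, Finset.mem_singleton]
    constructor
    · rintro ⟨S, hS, h1, h2⟩
      rw [h1]
      exact ⟨hS, h2⟩
    · rintro ⟨h1, h2⟩
      exact ⟨q.1, h1, rfl, h2⟩
  have hIcard : I.card = i.choose ℓ * (i - ℓ) := by
    rw [hIdef, Finset.card_biUnion]
    · have heach : ∀ S ∈ Finset.powersetCard ℓ Plt, (({S} ×ˢ (Plt \ S)).card) = i - ℓ := by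
        intro S hS
        obtain ⟨hsub, hcard⟩ := Finset.mem_powersetCard.1 hS
        rw [Finset.card_product, Finset.card_singleton, one_mul,
          Finset.card_sdiff_of_subset hsub, hPltcard, hcard]
      rw [Finset.sum_congr rfl heach, Finset.sum_const, smul_eq_mul,
        Finset.card_powersetCard, hPltcard]
    · intro x hx y hy hxy
      rw [Function.onFun, Finset.disjoint_left]
      intro q hqx hqy
      obtain ⟨h1, -⟩ := Finset.mem_product.1 hqx
      obtain ⟨h2, -⟩ := Finset.mem_product.1 hqy
      rw [Finset.mem_singleton] at h1 h2
      exact hxy (h1 ▸ h2 ▸ rfl)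
  have hmaps2 : ∀ g ∈ G, ((Finset.univ.filter fun m : Fin k => (m : ℕ) < i ∧ ((g m : ℕ) < j),
      if h : ∃ m : Fin k, (m : ℕ) < i ∧ g m = jF then h.choose else iF) :
        Finset (Fin k) × Fin k) ∈ I := by
    intro g hg
    obtain ⟨hinj, hcard, hiv, hex, hoff⟩ := (Finset.mem_filter.1 hg).2
    rw [hImem]
    constructor
    · refine Finset.mem_powersetCard.2 ⟨?_, hcard⟩
      intro m hm
      exact (hmemPlt m).2 (Finset.mem_filter.1 hm).2.1
    · simp only [dif_pos hex]
      obtain ⟨h1, h2⟩ := hex.choose_spec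
      refine Finset.mem_sdiff.2 ⟨(hmemPlt _).2 h1, ?_⟩
      intro hmem
      have := (Finset.mem_filter.1 hmem).2.2
      rw [h2, hjFval] at this
      omega
  have hfib2 : ∀ q ∈ I, (G.filter fun g =>
      ((Finset.univ.filter fun m : Fin k => (m : ℕ) < i ∧ ((g m : ℕ) < j),
        if h : ∃ m : Fin k, (m : ℕ) < i ∧ g m = jF then h.choose else iF) :
          Finset (Fin k) × Fin k) = q).card
      = j.descFactorial ℓ * (k - j - 1).descFactorial (i - ℓ) := by
    rintro ⟨S, p⟩ hq
    rw [hImem] at hq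
    have hS : S ∈ Finset.powersetCard ℓ Plt := hq.1
    have hp' : p ∈ Plt \ S := hq.2
    have hSsub : S ⊆ Plt := (Finset.mem_powersetCard.1 hS).1
    have hScard : S.card = ℓ := (Finset.mem_powersetCard.1 hS).2
    have hpPlt : p ∈ Plt := (Finset.mem_sdiff.1 hp').1
    have hpS : p ∉ S := (Finset.mem_sdiff.1 hp').2
    have hpi : (p : ℕ) < i := (hmemPlt p).1 hpPlt
    have hpP : p ∈ P := hPltP hpPlt
    set rest : Finset (Fin k) := (P \ S).erase p with hrestdef
    have hSsubP : S ⊆ P := hSsub.trans hPltP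
    have hprest : p ∉ rest := Finset.notMem_erase p _
    have hrestP : rest ⊆ P := (Finset.erase_subset _ _).trans (Finset.sdiff_subset)
    have hrestS : ∀ x ∈ rest, x ∉ S := by
      intro x hx
      exact (Finset.mem_sdiff.1 (Finset.mem_of_mem_erase hx)).2
    have hrestp : ∀ x ∈ rest, x ≠ p := fun x hx => Finset.ne_of_mem_erase hx
    have hsplit : ∀ x ∈ P, x ∉ S → x ≠ p → x ∈ rest := by
      intro x hxP hxS hxp
      exact Finset.mem_erase.2 ⟨hxp, Finset.mem_sdiff.2 ⟨hxP, hxS⟩⟩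
    have hrestcard : rest.card = i - ℓ := by
      rw [hrestdef, Finset.card_erase_of_mem (Finset.mem_sdiff.2 ⟨hpP, hpS⟩),
        Finset.card_sdiff_of_subset hSsubP, hPcard, hScard]
      omega
    have hiFrest : iF ∈ rest := by
      refine hsplit iF hiFP ?_ ?_
      · intro hmem
        have h1 := (hmemPlt iF).1 (hSsub hmem)
        rw [hiFval] at h1
        omega
      · intro hmem
        have hpv : (p : ℕ) = i := hmem ▸ hiFval
        omega
    have hEq : (G.filter fun g =>
        ((Finset.univ.filter fun m : Fin k => (m : ℕ) < i ∧ ((g m : ℕ) < j),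
          if h : ∃ m : Fin k, (m : ℕ) < i ∧ g m = jF then h.choose else iF) :
            Finset (Fin k) × Fin k) = (S, p))
        = (Finset.univ.filter fun g : Fin k → Fin k =>
            Set.InjOn g ↑S ∧ (∀ x ∈ S, g x ∈ tIio) ∧ g p = jF ∧
            Set.InjOn g ↑rest ∧ (∀ x ∈ rest, g x ∈ tIoi) ∧
            (∀ x, x ∉ S → x ≠ p → x ∉ rest → g x = x)) := by
      ext g
      simp only [Finset.mem_filter, Finset.mem_univ, true_and, Prod.mk.injEq]
      constructor
      · rintro ⟨hgG, hfS, hfp⟩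
        obtain ⟨hinj, hcard, hiv, hex, hoff⟩ := (Finset.mem_filter.1 hgG).2
        rw [dif_pos hex] at hfp
        obtain ⟨hc1, hc2⟩ := hex.choose_spec
        have hgp : g p = jF := by rw [← hfp]; exact hc2
        have hmemS : ∀ x, x ∈ S ↔ ((x : ℕ) < i ∧ (g x : ℕ) < j) := by
          intro x
          rw [← hfS]
          simp
        have hgrest : ∀ x ∈ rest, j < (g x : ℕ) := by
          intro x hx
          have hxP : x ∈ P := hrestP hx
          have hxS : x ∉ S := hrestS x hx
          have hxp : x ≠ p := hrestp x hx
          have hxi1 : (x : ℕ) < i + 1 := (hmemP x).1 hxP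
          by_cases hxi : (x : ℕ) < i
          · have h1 : ¬ ((g x : ℕ) < j) := fun hlt => hxS ((hmemS x).2 ⟨hxi, hlt⟩)
            have h2 : (g x : ℕ) ≠ j := by
              intro hval
              have hgx : g x = jF := Fin.ext hval
              have : x = p := hinj (Finset.mem_coe.2 hxP) (Finset.mem_coe.2 hpP)
                (by rw [hgx, hgp])
              exact hxp this
            omega
          · have hxiF : x = iF := Fin.ext (by rw [hiFval]; omega)
            rw [hxiF]
            omega
        refine ⟨?_, ?_, hgp, ?_, ?_, ?_⟩
        · exact hinj.mono (Finset.coe_subset.2 hSsubP)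
        · intro x hx
          exact (hmemIio _).2 ((hmemS x).1 hx).2
        · exact hinj.mono (Finset.coe_subset.2 hrestP)
        · intro x hx
          exact (hmemIoi _).2 (hgrest x hx)
        · intro x hxS hxp hxrest
          refine hoff x ?_
          intro hxP
          exact hxrest (hsplit x hxP hxS hxp)
      · rintro ⟨hinj1, ht1, hgp, hinj2, ht2, hoff⟩
        have vS : ∀ x ∈ S, (g x : ℕ) < j := fun x hx => (hmemIio _).1 (ht1 x hx)
        have vR : ∀ x ∈ rest, j < (g x : ℕ) := fun x hx => (hmemIoi _).1 (ht2 x hx)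
        have vp : (g p : ℕ) = j := by rw [hgp]
        have hSfilter : (Finset.univ.filter fun m : Fin k =>
            (m : ℕ) < i ∧ ((g m : ℕ) < j)) = S := by
          ext m
          simp only [Finset.mem_filter, Finset.mem_univ, true_and]
          constructor
          · rintro ⟨h1, h2⟩
            have hmP : m ∈ P := (hmemP m).2 (by omega)
            by_contra hmS
            by_cases hmp : m = p
            · rw [hmp] at h2
              omega
            · have := vR m (hsplit m hmP hmS hmp)
              omega
          · intro hmS
            refine ⟨(hmemPlt m).1 (hSsub hmS), vS m hmS⟩
        have hclass : ∀ x, x ∈ P → x = p ∨ x ∈ S ∨ x ∈ rest := by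
          intro x hx
          by_cases h1 : x = p
          · exact Or.inl h1
          · by_cases h2 : x ∈ S
            · exact Or.inr (Or.inl h2)
            · exact Or.inr (Or.inr (hsplit x hx h2 h1))
        have hinjP : Set.InjOn g ↑P := by
          intro x hx y hy hxy
          have hx' := Finset.mem_coe.1 hx
          have hy' := Finset.mem_coe.1 hy
          have hvalxy : (g x : ℕ) = (g y : ℕ) := by rw [hxy]
          rcases hclass x hx' with hxp | hxS | hxR <;>
            rcases hclass y hy' with hyp | hyS | hyR
          · rw [hxp, hyp]
          · exfalso; rw [hxp] at hvalxy; have := vS y hyS; omega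
          · exfalso; rw [hxp] at hvalxy; have := vR y hyR; omega
          · exfalso; rw [hyp] at hvalxy; have := vS x hxS; omega
          · exact hinj1 (Finset.mem_coe.2 hxS) (Finset.mem_coe.2 hyS) hxy
          · exfalso; have := vS x hxS; have := vR y hyR; omega
          · exfalso; rw [hyp] at hvalxy; have := vR x hxR; omega
          · exfalso; have := vS y hyS; have := vR x hxR; omega
          · exact hinj2 (Finset.mem_coe.2 hxR) (Finset.mem_coe.2 hyR) hxy
        have hex : ∃ m : Fin k, (m : ℕ) < i ∧ g m = jF := ⟨p, hpi, hgp⟩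
        refine ⟨Finset.mem_filter.2 ⟨Finset.mem_univ _, hinjP, ?_, ?_, hex, ?_⟩, ?_, ?_⟩
        · rw [hSfilter, hScard]
        · have := vR iF hiFrest
          omega
        · intro x hx
          refine hoff x ?_ ?_ ?_
          · intro h; exact hx (hSsubP h)
          · intro h; exact hx (h ▸ hpP)
          · intro h; exact hx (hrestP h)
        · exact hSfilter
        · rw [dif_pos hex]
          obtain ⟨hc1, hc2⟩ := hex.choose_spec
          have hmP : hex.choose ∈ P := (hmemP _).2 (by omega)
          rcases hclass _ hmP with h1 | h2 | h3
          · exact h1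
          · exfalso; have := vS _ h2; rw [hc2, hjFval] at this; omega
          · exfalso; have := vR _ h3; rw [hc2, hjFval] at this; omega
    rw [hEq]
    have h2 := card_injfun_two S rest tIio tIoi p jF (fun x => x) hpS hprest
      (fun x hx hx2 => (hrestS x hx2) hx)
    rw [htIiocard, htIoicard, hScard, hrestcard] at h2
    convert h2 using 2
    ext g
    simp [Finset.mem_filter]
  have stage2 : G.card = (i.choose ℓ * (i - ℓ)) *
      (j.descFactorial ℓ * (k - j - 1).descFactorial (i - ℓ)) := by
    rw [Finset.card_eq_sum_card_fiberwise hmaps2, Finset.sum_congr rfl hfib2,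
      Finset.sum_const, smul_eq_mul, hIcard]
  -- Final arithmetic
  have hcount : T.card = (i.choose ℓ * (i - ℓ)) *
      (j.descFactorial ℓ * (k - j - 1).descFactorial (i - ℓ)) * (k - i - 1)! := by
    rw [stage1, stage2]
  have natid : T.card * ((i - ℓ - 1)! * (j - ℓ)! * (k + ℓ - i - j - 1)! * ℓ !)
      = i ! * j ! * (k - i - 1)! * (k - j - 1)! := by
    rw [hcount]
    have hb : (i - ℓ) * (i - ℓ - 1)! = (i - ℓ)! := Nat.mul_factorial_pred (by omega)
    have hc : (j - ℓ)! * j.descFactorial ℓ = j ! := Nat.factorial_mul_descFactorial hℓ3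
    have hd : (k + ℓ - i - j - 1)! * (k - j - 1).descFactorial (i - ℓ) = (k - j - 1)! := by
      have h2 : (k - j - 1) - (i - ℓ) = k + ℓ - i - j - 1 := by omega
      rw [← h2]
      exact Nat.factorial_mul_descFactorial (by omega)
    have ha : i.choose ℓ * ℓ ! * (i - ℓ)! = i ! := Nat.choose_mul_factorial_mul_factorial (by omega)
    calc (i.choose ℓ * (i - ℓ)) * (j.descFactorial ℓ * (k - j - 1).descFactorial (i - ℓ)) *
          (k - i - 1)! * ((i - ℓ - 1)! * (j - ℓ)! * (k + ℓ - i - j - 1)! * ℓ !)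
        = (i.choose ℓ * ℓ ! * ((i - ℓ) * (i - ℓ - 1)!)) * ((j - ℓ)! * j.descFactorial ℓ) *
          ((k + ℓ - i - j - 1)! * (k - j - 1).descFactorial (i - ℓ)) * (k - i - 1)! := by ring
      _ = i ! * j ! * (k - i - 1)! * (k - j - 1)! := by
          rw [hb, hc, hd, ha]
          ring
  have hden : ((i - ℓ - 1)! : ℝ) * ((j - ℓ)!) * ((k + ℓ - i - j - 1)!) * (ℓ !) ≠ 0 := by
    positivity
  rw [eq_div_iff hden]
  exact_mod_cast natid
end

section
/- Let k ≥ 2 be an integer, let i, j ∈ {0,1,…,k−1}, and let ℓ be an integer with max(0, i+j+1−k) ≤ ℓ, ℓ ≤ i and ℓ ≤ j. Then the number of permutations π of {1,…,k} with N_π(i,j) = ℓ and π(i+1) = j+1 equals i!·j!·(k−i−1)!·(k−j−1)! / ((i−ℓ)!·(j−ℓ)!·(k+ℓ−i−j−1)!·ℓ!). -/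
open Nat Finset

lemma fiber_perm_card {α ι : Type*} [Fintype α] [DecidableEq α] [Fintype ι] [DecidableEq ι]
    (f g : α → ι) (h : ∀ i, Fintype.card {x // f x = i} = Fintype.card {x // g x = i}) :
    Fintype.card {π : Equiv.Perm α // ∀ x, g (π x) = f x} =
      ∏ i : ι, (Fintype.card {x // f x = i})! := by
  classical
  have E : {π : Equiv.Perm α // ∀ x, g (π x) = f x} ≃
      (∀ i : ι, {x // f x = i} ≃ {x // g x = i}) :=
    { toFun := fun π i =>
        { toFun := fun x => ⟨π.1 x.1, by rw [π.2 x.1, x.2]⟩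
          invFun := fun y => ⟨π.1.symm y.1, by
            have := π.2 (π.1.symm y.1); rw [Equiv.apply_symm_apply] at this
            rw [← this, y.2]⟩
          left_inv := fun x => by simp
          right_inv := fun y => by simp }
      invFun := fun F =>
        ⟨(Equiv.sigmaFiberEquiv f).symm.trans
          ((Equiv.sigmaCongrRight F).trans (Equiv.sigmaFiberEquiv g)), fun x => by
            simp [Equiv.sigmaFiberEquiv, Equiv.sigmaCongrRight]
            exact (F (f x) ⟨x, rfl⟩).2⟩
      left_inv := fun π => by
        ext x
        simp [Equiv.sigmaFiberEquiv, Equiv.sigmaCongrRight]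
      right_inv := fun F => by
        funext i
        ext x
        obtain ⟨v, hv⟩ := x
        subst hv
        rfl }
  rw [Fintype.card_congr E, Fintype.card_pi]
  refine Finset.prod_congr rfl fun i _ => ?_
  rw [Fintype.card_equiv (Fintype.equivOfCardEq (h i))]

set_option maxHeartbeats 2000000 in
/-- Count of permutations `π` of `{1,…,k}` with `N_π(i,j) = ℓ` and `π(i+1) = j+1`
(0-indexed: `π(i) = j` on `Fin k`). -/
theorem stmt_10 (k i j ℓ : ℕ) (hk : 2 ≤ k) (hik : i < k) (hjk : j < k)
    (hℓ1 : i + j + 1 ≤ k + ℓ) (hℓ2 : ℓ ≤ i) (hℓ3 : ℓ ≤ j) :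
    ((Finset.univ.filter fun π : Equiv.Perm (Fin k) =>
        Nperm k π i j = ℓ ∧ π ⟨i, hik⟩ = ⟨j, hjk⟩).card : ℝ) =
      ((i ! : ℝ) * (j !) * ((k - i - 1)!) * ((k - j - 1)!)) /
        (((i - ℓ)! : ℝ) * ((j - ℓ)!) * ((k + ℓ - i - j - 1)!) * (ℓ !)) := by
  classical
  set p : Fin k := ⟨i, hik⟩ with hp
  set q : Fin k := ⟨j, hjk⟩ with hq
  set A : Finset (Fin k) := Finset.Iio p with hA
  set C : Finset (Fin k) := Finset.Iio q with hC
  set D : Finset (Fin k) := Finset.Ioi q with hD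
  have hmemA : ∀ m : Fin k, m ∈ A ↔ (m : ℕ) < i := fun m => by
    simp [hA, Fin.lt_def, hp]
  have hmemC : ∀ m : Fin k, m ∈ C ↔ (m : ℕ) < j := fun m => by
    simp [hC, Fin.lt_def, hq]
  have hmemD : ∀ m : Fin k, m ∈ D ↔ j < (m : ℕ) := fun m => by
    simp [hD, Fin.lt_def, hq]
  have hcardA : A.card = i := Fin.card_Iio p
  have hcardC : C.card = j := Fin.card_Iio q
  have hcardD : D.card = k - 1 - j := Fin.card_Ioi q
  have hpA : p ∉ A := by simp [hmemA, hp]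
  have hqC : q ∉ C := by simp [hmemC, hq]
  have hqD : q ∉ D := by simp [hmemD, hq]
  have hCD : ∀ m : Fin k, m ∈ C → m ∈ D → False := fun m h1 h2 => by
    rw [hmemC] at h1; rw [hmemD] at h2; omega
  -- the predicate and the classifying map
  set P : Equiv.Perm (Fin k) → Prop := fun π => Nperm k π i j = ℓ ∧ π p = q with hP
  set Φ : Equiv.Perm (Fin k) → Finset (Fin k) × Finset (Fin k) × Finset (Fin k) :=
    fun π => (A.filter (fun m => π m ∈ C), (A.filter (fun m => π m ∈ C)).image π,
              (A \ A.filter (fun m => π m ∈ C)).image π) with hΦdef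
  set I : Finset (Finset (Fin k) × Finset (Fin k) × Finset (Fin k)) :=
    (A.powersetCard ℓ) ×ˢ (C.powersetCard ℓ) ×ˢ (D.powersetCard (i - ℓ)) with hI
  have hNperm : ∀ π : Equiv.Perm (Fin k),
      Nperm k π i j = (A.filter (fun m => π m ∈ C)).card := by
    intro π
    unfold Nperm
    congr 1
    ext m
    simp [hmemA, hmemC, Finset.mem_filter]
  have hΦmem : ∀ π ∈ Finset.univ.filter P, Φ π ∈ I := by
    intro π hπ
    rw [Finset.mem_filter] at hπ
    obtain ⟨-, hN, hpq⟩ := hπ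
    rw [hNperm π] at hN
    rw [hI, Finset.mem_product, Finset.mem_product]
    refine ⟨?_, ?_, ?_⟩
    · rw [Finset.mem_powersetCard]
      exact ⟨Finset.filter_subset _ _, hN⟩
    · rw [Finset.mem_powersetCard]
      constructor
      · intro y hy
        rw [Finset.mem_image] at hy
        obtain ⟨m, hm, rfl⟩ := hy
        exact (Finset.mem_filter.mp hm).2
      · rw [Finset.card_image_of_injective _ π.injective, hN]
    · rw [Finset.mem_powersetCard]
      constructor
      · intro y hy
        rw [Finset.mem_image] at hy
        obtain ⟨m, hm, rfl⟩ := hy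
        rw [Finset.mem_sdiff, Finset.mem_filter] at hm
        obtain ⟨hmA, hm2⟩ := hm
        have h1 : ¬ ((π m : ℕ) < j) := by
          intro h
          exact hm2 ⟨hmA, (hmemC _).mpr h⟩
        have h2 : π m ≠ q := by
          intro h
          have : m = p := π.injective (h.trans hpq.symm)
          rw [this] at hmA; exact hpA hmA
        rw [hmemD]
        have : (π m : ℕ) ≠ j := fun h => h2 (Fin.ext h)
        omega
      · rw [Finset.card_image_of_injective _ π.injective,
          Finset.card_sdiff_of_subset (Finset.filter_subset _ _), hcardA, hN]
  rw [Finset.card_eq_sum_card_fiberwise hΦmem]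
  -- fiber count
  have hfiber : ∀ x ∈ I, ((Finset.univ.filter P).filter (fun π => Φ π = x)).card =
      ℓ ! * (1 * ((i - ℓ)! * ((k - i - 1)! * 1))) := by
    rintro ⟨S, T, U⟩ hx
    rw [hI, Finset.mem_product, Finset.mem_product] at hx
    obtain ⟨hxS, hxT, hxU⟩ := hx
    rw [Finset.mem_powersetCard] at hxS hxT hxU
    obtain ⟨hSA, hScard⟩ := hxS
    obtain ⟨hTC, hTcard⟩ := hxT
    obtain ⟨hUD, hUcard⟩ := hxU
    have hpS : p ∉ S := fun h => hpA (hSA h)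
    have hqT : q ∉ T := fun h => hqC (hTC h)
    have hqU : q ∉ U := fun h => hqD (hUD h)
    have hTU : ∀ m, m ∈ T → m ∈ U → False := fun m h1 h2 => hCD m (hTC h1) (hUD h2)
    set f : Fin k → Fin 4 := fun m =>
      if m ∈ S then 0 else if m = p then 1 else if m ∈ A then 2 else 3 with hf
    set g : Fin k → Fin 4 := fun m =>
      if m ∈ T then 0 else if m = q then 1 else if m ∈ U then 2 else 3 with hg
    -- characterize g-values
    have hg0 : ∀ m, g m = 0 ↔ m ∈ T := by
      intro m; simp only [hg]; split_ifs with h1 h2 h3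
      · exact iff_of_true rfl h1
      · exact iff_of_false (by decide) h1
      · exact iff_of_false (by decide) h1
      · exact iff_of_false (by decide) h1
    have hg1 : ∀ m, g m = 1 ↔ m = q := by
      intro m; simp only [hg]; split_ifs with h1 h2 h3
      · exact iff_of_false (by decide) (fun h => hqT (h ▸ h1))
      · exact iff_of_true rfl h2
      · exact iff_of_false (by decide) h2
      · exact iff_of_false (by decide) h2
    have hg2 : ∀ m, g m = 2 ↔ m ∈ U := by
      intro m; simp only [hg]; split_ifs with h1 h2 h3
      · exact iff_of_false (by decide) (fun h => hTU m h1 h)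
      · exact iff_of_false (by decide) (fun h => hqU (h2 ▸ h))
      · exact iff_of_true rfl h3
      · exact iff_of_false (by decide) h3
    have hg3 : ∀ m, g m = 3 ↔ (m ∉ T ∧ m ≠ q ∧ m ∉ U) := by
      intro m; simp only [hg]; split_ifs with h1 h2 h3
      · exact iff_of_false (by decide) (fun h => h.1 h1)
      · exact iff_of_false (by decide) (fun h => h.2.1 h2)
      · exact iff_of_false (by decide) (fun h => h.2.2 h3)
      · exact iff_of_true rfl ⟨h1, h2, h3⟩
    have hf0 : ∀ m, f m = 0 ↔ m ∈ S := by
      intro m; simp only [hf]; split_ifs with h1 h2 h3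
      · exact iff_of_true rfl h1
      · exact iff_of_false (by decide) h1
      · exact iff_of_false (by decide) h1
      · exact iff_of_false (by decide) h1
    have hf1 : ∀ m, f m = 1 ↔ m = p := by
      intro m; simp only [hf]; split_ifs with h1 h2 h3
      · exact iff_of_false (by decide) (fun h => hpS (h ▸ h1))
      · exact iff_of_true rfl h2
      · exact iff_of_false (by decide) h2
      · exact iff_of_false (by decide) h2
    have hf2 : ∀ m, f m = 2 ↔ (m ∈ A ∧ m ∉ S) := by
      intro m; simp only [hf]; split_ifs with h1 h2 h3
      · exact iff_of_false (by decide) (fun h => h.2 h1)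
      · exact iff_of_false (by decide) (fun h => hpA (h2 ▸ h.1))
      · exact iff_of_true rfl ⟨h3, h1⟩
      · exact iff_of_false (by decide) (fun h => h3 h.1)
    have hf3 : ∀ m, f m = 3 ↔ (m ∉ A ∧ m ≠ p) := by
      intro m; simp only [hf]; split_ifs with h1 h2 h3
      · exact iff_of_false (by decide) (fun h => h.1 (hSA h1))
      · exact iff_of_false (by decide) (fun h => h.2 h2)
      · exact iff_of_false (by decide) (fun h => h.1 h3)
      · exact iff_of_true rfl ⟨h3, h2⟩
    -- cardinalities of the fibers
    have cardf0 : Fintype.card {x // f x = 0} = ℓ := by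
      rw [Fintype.card_subtype]
      rw [show Finset.univ.filter (fun x => f x = 0) = S by ext m; simp [hf0 m], hScard]
    have cardf1 : Fintype.card {x // f x = 1} = 1 := by
      rw [Fintype.card_subtype]
      rw [show Finset.univ.filter (fun x => f x = 1) = {p} by ext m; simp [hf1 m]]
      simp
    have cardf2 : Fintype.card {x // f x = 2} = i - ℓ := by
      rw [Fintype.card_subtype]
      rw [show Finset.univ.filter (fun x => f x = 2) = A \ S by
        ext m; simp [hf2 m, Finset.mem_sdiff]]
      rw [Finset.card_sdiff_of_subset hSA, hcardA, hScard]
    have cardf3 : Fintype.card {x // f x = 3} = k - i - 1 := by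
      rw [Fintype.card_subtype]
      rw [show Finset.univ.filter (fun x => f x = 3) = (A ∪ {p})ᶜ by
        ext m
        simp [hf3 m, Finset.mem_compl, Finset.mem_union, not_or, and_comm]]
      rw [Finset.card_compl, Finset.card_union_of_disjoint (by simp [hpA]), hcardA]
      simp [Fintype.card_fin]
      omega
    have cardg0 : Fintype.card {x // g x = 0} = ℓ := by
      rw [Fintype.card_subtype]
      rw [show Finset.univ.filter (fun x => g x = 0) = T by ext m; simp [hg0 m], hTcard]
    have cardg1 : Fintype.card {x // g x = 1} = 1 := by
      rw [Fintype.card_subtype]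
      rw [show Finset.univ.filter (fun x => g x = 1) = {q} by ext m; simp [hg1 m]]
      simp
    have cardg2 : Fintype.card {x // g x = 2} = i - ℓ := by
      rw [Fintype.card_subtype]
      rw [show Finset.univ.filter (fun x => g x = 2) = U by ext m; simp [hg2 m], hUcard]
    have cardg3 : Fintype.card {x // g x = 3} = k - i - 1 := by
      rw [Fintype.card_subtype]
      rw [show Finset.univ.filter (fun x => g x = 3) = (T ∪ {q} ∪ U)ᶜ by
        ext m
        simp only [Finset.mem_filter, Finset.mem_univ, true_and, hg3 m, Finset.mem_compl,
          Finset.mem_union, Finset.mem_singleton, not_or]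
        tauto]
      rw [Finset.card_compl]
      have : (T ∪ {q} ∪ U).card = ℓ + 1 + (i - ℓ) := by
        rw [Finset.card_union_of_disjoint, Finset.card_union_of_disjoint, hTcard, hUcard]
        · simp
        · simp [hqT]
        · rw [Finset.disjoint_left]
          intro m hm
          rw [Finset.mem_union, Finset.mem_singleton] at hm
          intro hmU
          rcases hm with hm | rfl
          · exact hTU m hm hmU
          · exact hqU hmU
      rw [this]
      simp [Fintype.card_fin]
      omega
    -- the fiber equals the set of block-respecting permutations
    have hsetEq : (Finset.univ.filter P).filter (fun π => Φ π = (S, T, U)) =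
        Finset.univ.filter (fun π : Equiv.Perm (Fin k) => ∀ m, g (π m) = f m) := by
      ext π
      simp only [Finset.mem_filter, Finset.mem_univ, true_and]
      constructor
      · rintro ⟨⟨hN, hpq⟩, hΦx⟩
        rw [hΦdef] at hΦx
        simp only [Prod.mk.injEq] at hΦx
        obtain ⟨hS, hT, hU⟩ := hΦx
        rw [hS] at hT hU
        intro m
        by_cases hmS : m ∈ S
        · rw [(hf0 m).mpr hmS] at *
          rw [hg0]
          rw [← hT]
          exact Finset.mem_image_of_mem π hmS
        · by_cases hmp : m = p
          · subst hmp
            rw [(hf1 p).mpr rfl, hpq]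
            exact (hg1 q).mpr rfl
          · by_cases hmA : m ∈ A
            · rw [(hf2 m).mpr ⟨hmA, hmS⟩, hg2, ← hU]
              refine Finset.mem_image_of_mem π ?_
              rw [Finset.mem_sdiff]
              exact ⟨hmA, hmS⟩
            · rw [(hf3 m).mpr ⟨hmA, hmp⟩, hg3]
              refine ⟨?_, ?_, ?_⟩
              · rw [← hT]
                intro hc
                rw [Finset.mem_image] at hc
                obtain ⟨y, hy, hyeq⟩ := hc
                have := π.injective hyeq
                subst this
                exact hmS hy
              · intro hc
                rw [← hpq] at hc
                exact hmp (π.injective hc)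
              · rw [← hU]
                intro hc
                rw [Finset.mem_image] at hc
                obtain ⟨y, hy, hyeq⟩ := hc
                have := π.injective hyeq
                subst this
                rw [Finset.mem_sdiff] at hy
                exact hmA hy.1
      · intro hfg
        have hπp : π p = q := by
          have := hfg p
          rw [(hf1 p).mpr rfl, hg1] at this
          exact this
        have hSin : ∀ m ∈ S, π m ∈ T := by
          intro m hm
          have := hfg m
          rw [(hf0 m).mpr hm, hg0] at this
          exact this
        have hUin : ∀ m ∈ A \ S, π m ∈ U := by
          intro m hm
          rw [Finset.mem_sdiff] at hm
          have := hfg m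
          rw [(hf2 m).mpr hm, hg2] at this
          exact this
        have hSeq : A.filter (fun m => π m ∈ C) = S := by
          ext m
          rw [Finset.mem_filter]
          constructor
          · rintro ⟨hmA, hmC⟩
            by_contra hmS
            have := hUin m (Finset.mem_sdiff.mpr ⟨hmA, hmS⟩)
            exact hCD _ hmC (hUD this)
          · intro hmS
            exact ⟨hSA hmS, hTC (hSin m hmS)⟩
        have hTeq : S.image π = T := by
          apply Finset.eq_of_subset_of_card_le
          · intro y hy
            rw [Finset.mem_image] at hy
            obtain ⟨m, hm, rfl⟩ := hy
            exact hSin m hm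
          · rw [Finset.card_image_of_injective _ π.injective, hScard, hTcard]
        have hUeq : (A \ S).image π = U := by
          apply Finset.eq_of_subset_of_card_le
          · intro y hy
            rw [Finset.mem_image] at hy
            obtain ⟨m, hm, rfl⟩ := hy
            exact hUin m hm
          · rw [Finset.card_image_of_injective _ π.injective,
              Finset.card_sdiff_of_subset hSA, hcardA, hScard, hUcard]
        refine ⟨⟨?_, hπp⟩, ?_⟩
        · rw [hNperm π, hSeq, hScard]
        · rw [hΦdef]
          simp only [Prod.mk.injEq]
          exact ⟨hSeq, by rw [hSeq, hTeq], by rw [hSeq, hUeq]⟩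
    rw [hsetEq]
    have hcards : ∀ v : Fin 4, Fintype.card {x // f x = v} = Fintype.card {x // g x = v} := by
      intro v
      fin_cases v
      · exact cardf0.trans cardg0.symm
      · exact cardf1.trans cardg1.symm
      · exact cardf2.trans cardg2.symm
      · exact cardf3.trans cardg3.symm
    have hcount := fiber_perm_card f g hcards
    rw [Fin.prod_univ_four, cardf0, cardf1, cardf2, cardf3, Fintype.card_subtype] at hcount
    rw [show (ℓ ! * (1 * ((i - ℓ)! * ((k - i - 1)! * 1)))) =
        ℓ ! * (1)! * (i - ℓ)! * (k - i - 1)! by simp [Nat.factorial_one]; ring, ← hcount]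
  rw [Finset.sum_congr rfl hfiber, Finset.sum_const, smul_eq_mul]
  have hIcard : I.card = i.choose ℓ * (j.choose ℓ * (k - 1 - j).choose (i - ℓ)) := by
    rw [hI, Finset.card_product, Finset.card_product,
      Finset.card_powersetCard, Finset.card_powersetCard, Finset.card_powersetCard,
      hcardA, hcardC, hcardD]
  rw [hIcard]
  -- now pure arithmetic
  have hd1 : i - ℓ ≤ k - 1 - j := by omega
  have c1 : i.choose ℓ * ℓ ! * (i - ℓ)! = i ! := Nat.choose_mul_factorial_mul_factorial hℓ2
  have c2 : j.choose ℓ * ℓ ! * (j - ℓ)! = j ! := Nat.choose_mul_factorial_mul_factorial hℓ3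
  have c3 : (k - 1 - j).choose (i - ℓ) * (i - ℓ)! * ((k - 1 - j) - (i - ℓ))! = (k - 1 - j)! :=
    Nat.choose_mul_factorial_mul_factorial hd1
  have e1 : (k - 1 - j) - (i - ℓ) = k + ℓ - i - j - 1 := by omega
  have e2 : k - 1 - j = k - j - 1 := by omega
  rw [e1, e2] at c3
  rw [e2]
  have hden : ((i - ℓ)! : ℝ) * ((j - ℓ)!) * ((k + ℓ - i - j - 1)!) * (ℓ !) ≠ 0 := by
    positivity
  rw [eq_div_iff hden]
  have key2 : i.choose ℓ * (j.choose ℓ * (k - j - 1).choose (i - ℓ)) *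
      (ℓ ! * (1 * ((i - ℓ)! * ((k - i - 1)! * 1)))) *
      ((i - ℓ)! * (j - ℓ)! * (k + ℓ - i - j - 1)! * ℓ !) =
      i ! * j ! * (k - i - 1)! * (k - j - 1)! := by
    rw [← c1, ← c2, ← c3]
    ring
  exact_mod_cast key2
end

section
/- Let k ≥ 2 be an integer, let i ∈ {0,1,…,k} and j ∈ {0,1,…,k−1}. If a permutation π of {1,…,k} is chosen uniformly at random among all k! permutations, then the covariance of X_k(i/k, j/k) and X_k(i/k, (j+1)/k) equals ij(k−i)(k−j−1)/(k⁴(k−1)). -/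
open Nat Finset

lemma card_filter_fin_lt {k i : ℕ} (hi : i ≤ k) :
    (Finset.univ.filter fun m : Fin k => (m : ℕ) < i).card = i := by
  have h1 : ((Finset.univ : Finset (Fin k)).filter fun m : Fin k => (m : ℕ) < i).map Fin.valEmbedding
      = ((Finset.univ : Finset (Fin k)).map Fin.valEmbedding).filter fun x => x < i := by
    rw [Finset.filter_map]
    rfl
  have h2 : (((Finset.univ : Finset (Fin k)).map Fin.valEmbedding).filter fun x => x < i)
      = Finset.Iio i := by
    rw [Fin.map_valEmbedding_univ]
    ext x
    simp only [Finset.mem_filter, Finset.mem_Iio]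
    omega
  calc (Finset.univ.filter fun m : Fin k => (m : ℕ) < i).card
      = (((Finset.univ : Finset (Fin k)).filter fun m : Fin k => (m : ℕ) < i).map Fin.valEmbedding).card :=
        (Finset.card_map _).symm
    _ = i := by rw [h1, h2, Nat.card_Iio]

lemma sum_ind_lt {k i : ℕ} (hi : i ≤ k) :
    ∑ m : Fin k, (if (m : ℕ) < i then (1 : ℝ) else 0) = i := by
  rw [Finset.sum_boole, card_filter_fin_lt hi]

lemma sum_comp_perm {k : ℕ} (τ : Equiv.Perm (Fin k)) (h : Equiv.Perm (Fin k) → ℝ) :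
    ∑ π : Equiv.Perm (Fin k), h (π * τ) = ∑ π : Equiv.Perm (Fin k), h π :=
  Fintype.sum_equiv (Equiv.mulRight τ) _ _ fun _ => rfl

lemma single_exchange {k : ℕ} (f : Fin k → ℝ) (m m' : Fin k) :
    ∑ π : Equiv.Perm (Fin k), f (π m) = ∑ π : Equiv.Perm (Fin k), f (π m') := by
  have := sum_comp_perm (Equiv.swap m' m) (fun π => f (π m'))
  simpa using this

lemma single_count {k : ℕ} (f : Fin k → ℝ) (m : Fin k) :
    (k : ℝ) * ∑ π : Equiv.Perm (Fin k), f (π m) = (k ! : ℝ) * ∑ x : Fin k, f x := by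
  have h1 : ∑ m' : Fin k, ∑ π : Equiv.Perm (Fin k), f (π m')
      = (k : ℝ) * ∑ π : Equiv.Perm (Fin k), f (π m) := by
    rw [Finset.sum_congr rfl fun m' _ => single_exchange f m' m]
    simp [Finset.card_univ, mul_comm]
  rw [← h1, Finset.sum_comm]
  have h2 : ∀ π : Equiv.Perm (Fin k), ∑ m' : Fin k, f (π m') = ∑ x : Fin k, f x :=
    fun π => Equiv.sum_comp π f
  rw [Finset.sum_congr rfl fun π _ => h2 π, Finset.sum_const, Finset.card_univ,
    Fintype.card_perm, Fintype.card_fin, nsmul_eq_mul]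

lemma exists_perm_two {k : ℕ} {m m' n n' : Fin k} (h1 : m ≠ m') (h2 : n ≠ n') :
    ∃ τ : Equiv.Perm (Fin k), τ n = m ∧ τ n' = m' := by
  refine ⟨Equiv.swap (Equiv.swap n m n') m' * Equiv.swap n m, ?_, ?_⟩
  · have hq : Equiv.swap n m n' ≠ m := by
      intro h
      exact h2 ((Equiv.swap n m).injective (by rw [h, Equiv.swap_apply_left])).symm
    simp only [Equiv.Perm.mul_apply, Equiv.swap_apply_left]
    exact Equiv.swap_apply_of_ne_of_ne (Ne.symm hq) h1
  · simp [Equiv.Perm.mul_apply]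

lemma pair_exchange {k : ℕ} (g : Fin k → Fin k → ℝ) {m m' n n' : Fin k}
    (h1 : m ≠ m') (h2 : n ≠ n') :
    ∑ π : Equiv.Perm (Fin k), g (π m) (π m') = ∑ π : Equiv.Perm (Fin k), g (π n) (π n') := by
  obtain ⟨τ, hτ1, hτ2⟩ := exists_perm_two h1 h2
  have := sum_comp_perm τ (fun π => g (π n) (π n'))
  simp only [Equiv.Perm.mul_apply, hτ1, hτ2] at this
  exact this

lemma pair_count {k : ℕ} (g : Fin k → Fin k → ℝ) {m m' : Fin k} (h : m ≠ m') :
    (k : ℝ) * ((k : ℝ) - 1) * ∑ π : Equiv.Perm (Fin k), g (π m) (π m')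
      = (k ! : ℝ) * ((∑ a : Fin k, ∑ b : Fin k, g a b) - ∑ a : Fin k, g a a) := by
  have hk : 0 < k := Fin.pos m
  have key1 : ∑ n : Fin k, ∑ n' ∈ Finset.univ.erase n, ∑ π : Equiv.Perm (Fin k), g (π n) (π n')
      = (k : ℝ) * ((k : ℝ) - 1) * ∑ π : Equiv.Perm (Fin k), g (π m) (π m') := by
    have h1 : ∀ n : Fin k, ∑ n' ∈ Finset.univ.erase n, ∑ π : Equiv.Perm (Fin k), g (π n) (π n')
        = ((k : ℝ) - 1) * ∑ π : Equiv.Perm (Fin k), g (π m) (π m') := by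
      intro n
      rw [Finset.sum_congr rfl fun n' hn' =>
        pair_exchange g (Ne.symm (Finset.ne_of_mem_erase hn')) h,
        Finset.sum_const, Finset.card_erase_of_mem (Finset.mem_univ n), Finset.card_univ,
        Fintype.card_fin, nsmul_eq_mul, Nat.cast_sub hk, Nat.cast_one]
    rw [Finset.sum_congr rfl fun n _ => h1 n, Finset.sum_const, Finset.card_univ,
      Fintype.card_fin, nsmul_eq_mul]
    ring
  have key2 : ∑ n : Fin k, ∑ n' ∈ Finset.univ.erase n, ∑ π : Equiv.Perm (Fin k), g (π n) (π n')
      = (k ! : ℝ) * ((∑ a : Fin k, ∑ b : Fin k, g a b) - ∑ a : Fin k, g a a) := by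
    have h1 : ∀ n : Fin k, ∑ n' ∈ Finset.univ.erase n, ∑ π : Equiv.Perm (Fin k), g (π n) (π n')
        = ∑ π : Equiv.Perm (Fin k), ∑ n' ∈ Finset.univ.erase n, g (π n) (π n') :=
      fun n => Finset.sum_comm
    rw [Finset.sum_congr rfl fun n _ => h1 n, Finset.sum_comm]
    have h2 : ∀ π : Equiv.Perm (Fin k), ∑ n : Fin k, ∑ n' ∈ Finset.univ.erase n, g (π n) (π n')
        = (∑ a : Fin k, ∑ b : Fin k, g a b) - ∑ a : Fin k, g a a := by
      intro π
      have h3 : ∀ n : Fin k, ∑ n' ∈ Finset.univ.erase n, g (π n) (π n')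
          = (∑ n' : Fin k, g (π n) (π n')) - g (π n) (π n) :=
        fun n => Finset.sum_erase_eq_sub (Finset.mem_univ n)
      rw [Finset.sum_congr rfl fun n _ => h3 n, Finset.sum_sub_distrib]
      congr 1
      · rw [← Equiv.sum_comp π (fun a => ∑ b : Fin k, g a b)]
        exact Finset.sum_congr rfl fun n _ => Equiv.sum_comp π (fun b => g (π n) b)
      · exact Equiv.sum_comp π (fun a => g a a)
    rw [Finset.sum_congr rfl fun π _ => h2 π, Finset.sum_const, Finset.card_univ,
      Fintype.card_perm, Fintype.card_fin, nsmul_eq_mul]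
  rw [← key1, key2]

lemma Nperm_eq_sum (k : ℕ) (π : Equiv.Perm (Fin k)) (i j : ℕ) :
    (Nperm k π i j : ℝ) = ∑ m : Fin k,
      (if (m : ℕ) < i then (1 : ℝ) else 0) * (if ((π m : ℕ)) < j then 1 else 0) := by
  rw [Nperm, Finset.card_filter]
  push_cast
  refine Finset.sum_congr rfl fun m _ => ?_
  by_cases h1 : (m : ℕ) < i <;> by_cases h2 : ((π m : ℕ)) < j <;> simp [h1, h2]

/-- The covariance of `X_k(i/k, j/k)` and `X_k(i/k, j + 1/k)` under the uniform
distribution on the `k!` permutations equals `ij(k−i)(k−j−1)/(k⁴(k−1))`. -/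
theorem stmt_13 (k i j : ℕ) (hk : 2 ≤ k) (hi : i ≤ k) (hj : j < k) :
    (1 / (k ! : ℝ)) * (∑ π : Equiv.Perm (Fin k),
          ((Nperm k π (i) (j) : ℝ) / k) * ((Nperm k π (i) (j + 1) : ℝ) / k)) -
        ((1 / (k ! : ℝ)) * ∑ π : Equiv.Perm (Fin k), (Nperm k π (i) (j) : ℝ) / k) *
          ((1 / (k ! : ℝ)) * ∑ π : Equiv.Perm (Fin k), (Nperm k π (i) (j + 1) : ℝ) / k) =
      (i : ℝ) * j * ((k : ℝ) - i) * ((k : ℝ) - j - 1) / ((k : ℝ) ^ 4 * ((k : ℝ) - 1)) := by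
  have hk0 : (k : ℝ) ≠ 0 := by positivity
  have hk1 : (k : ℝ) - 1 ≠ 0 := by
    have : (2 : ℝ) ≤ (k : ℝ) := by exact_mod_cast hk
    nlinarith
  have hfac : (k ! : ℝ) ≠ 0 := by positivity
  set u : Fin k → ℝ := fun m => if (m : ℕ) < i then (1 : ℝ) else 0 with hu
  set f1 : Fin k → ℝ := fun x => if (x : ℕ) < j then (1 : ℝ) else 0 with hf1
  set f2 : Fin k → ℝ := fun x => if (x : ℕ) < j + 1 then (1 : ℝ) else 0 with hf2
  have hsu : ∑ m : Fin k, u m = i := sum_ind_lt hi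
  have hsf1 : ∑ x : Fin k, f1 x = j := sum_ind_lt hj.le
  have hsf2 : ∑ x : Fin k, f2 x = (j : ℝ) + 1 := by
    have := sum_ind_lt (k := k) (i := j + 1) hj
    push_cast at this ⊢
    exact this
  have hf12 : ∀ x : Fin k, f1 x * f2 x = f1 x := by
    intro x
    by_cases h : (x : ℕ) < j
    · simp [hf1, hf2, h, Nat.lt_succ_of_lt h, h.le]
    · simp [hf1, h]
  set A1 : ℝ := (k ! : ℝ) * j / k with hA1def
  set A2 : ℝ := (k ! : ℝ) * ((j : ℝ) + 1) / k with hA2def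
  set B : ℝ := (k ! : ℝ) * (j : ℝ) ^ 2 / ((k : ℝ) * ((k : ℝ) - 1)) with hBdef
  have hA1 : ∀ m : Fin k, ∑ π : Equiv.Perm (Fin k), f1 (π m) = A1 := by
    intro m
    have := single_count f1 m
    rw [hsf1] at this
    rw [hA1def, eq_div_iff hk0]
    linarith
  have hA2 : ∀ m : Fin k, ∑ π : Equiv.Perm (Fin k), f2 (π m) = A2 := by
    intro m
    have := single_count f2 m
    rw [hsf2] at this
    rw [hA2def, eq_div_iff hk0]
    linarith
  have hdiag : ∀ m : Fin k, ∑ π : Equiv.Perm (Fin k), f1 (π m) * f2 (π m) = A1 := by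
    intro m
    rw [Finset.sum_congr rfl fun π _ => hf12 (π m)]
    exact hA1 m
  have hB : ∀ m m' : Fin k, m ≠ m' →
      ∑ π : Equiv.Perm (Fin k), f1 (π m) * f2 (π m') = B := by
    intro m m' hmm'
    have := pair_count (fun a b => f1 a * f2 b) hmm'
    have hT : ∑ a : Fin k, ∑ b : Fin k, f1 a * f2 b = (j : ℝ) * ((j : ℝ) + 1) := by
      rw [Finset.sum_congr rfl fun a _ => by rw [← Finset.mul_sum, hsf2]]
      rw [← Finset.sum_mul, hsf1]
    have hD : ∑ a : Fin k, f1 a * f2 a = (j : ℝ) := by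
      rw [Finset.sum_congr rfl fun a _ => hf12 a, hsf1]
    rw [hT, hD] at this
    rw [hBdef, eq_div_iff (by exact mul_ne_zero hk0 hk1)]
    nlinarith [this]
  -- the three sums
  have hS1 : ∑ π : Equiv.Perm (Fin k), (Nperm k π i j : ℝ) = (i : ℝ) * A1 := by
    calc ∑ π : Equiv.Perm (Fin k), (Nperm k π i j : ℝ)
        = ∑ π : Equiv.Perm (Fin k), ∑ m : Fin k, u m * f1 (π m) :=
          Finset.sum_congr rfl fun π _ => Nperm_eq_sum k π i j
      _ = ∑ m : Fin k, ∑ π : Equiv.Perm (Fin k), u m * f1 (π m) := Finset.sum_comm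
      _ = ∑ m : Fin k, u m * A1 :=
          Finset.sum_congr rfl fun m _ => by rw [← Finset.mul_sum, hA1 m]
      _ = (i : ℝ) * A1 := by rw [← hsu, Finset.sum_mul]
  have hS2 : ∑ π : Equiv.Perm (Fin k), (Nperm k π i (j + 1) : ℝ) = (i : ℝ) * A2 := by
    calc ∑ π : Equiv.Perm (Fin k), (Nperm k π i (j + 1) : ℝ)
        = ∑ π : Equiv.Perm (Fin k), ∑ m : Fin k, u m * f2 (π m) :=
          Finset.sum_congr rfl fun π _ => Nperm_eq_sum k π i (j + 1)
      _ = ∑ m : Fin k, ∑ π : Equiv.Perm (Fin k), u m * f2 (π m) := Finset.sum_comm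
      _ = ∑ m : Fin k, u m * A2 :=
          Finset.sum_congr rfl fun m _ => by rw [← Finset.mul_sum, hA2 m]
      _ = (i : ℝ) * A2 := by rw [← hsu, Finset.sum_mul]
  have huu : ∀ m : Fin k, u m * u m = u m := by
    intro m; by_cases h : (m : ℕ) < i <;> simp [hu, h]
  have hS12 : ∑ π : Equiv.Perm (Fin k), (Nperm k π i j : ℝ) * (Nperm k π i (j + 1) : ℝ)
      = (i : ℝ) * ((i : ℝ) * B) + (i : ℝ) * (A1 - B) := by
    have hC : ∀ m m' : Fin k, ∑ π : Equiv.Perm (Fin k), f1 (π m) * f2 (π m')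
        = B + (if m' = m then A1 - B else 0) := by
      intro m m'
      by_cases hmm' : m' = m
      · rw [hmm', if_pos rfl, hdiag m]; ring
      · rw [if_neg hmm', hB m m' (fun h => hmm' h.symm), add_zero]
    calc ∑ π : Equiv.Perm (Fin k), (Nperm k π i j : ℝ) * (Nperm k π i (j + 1) : ℝ)
        = ∑ π : Equiv.Perm (Fin k), ∑ m : Fin k, ∑ m' : Fin k,
            (u m * f1 (π m)) * (u m' * f2 (π m')) := by
          refine Finset.sum_congr rfl fun π _ => ?_
          rw [Nperm_eq_sum k π i j, Nperm_eq_sum k π i (j + 1), Finset.sum_mul_sum]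
      _ = ∑ m : Fin k, ∑ π : Equiv.Perm (Fin k), ∑ m' : Fin k,
            (u m * f1 (π m)) * (u m' * f2 (π m')) := Finset.sum_comm
      _ = ∑ m : Fin k, ∑ m' : Fin k, ∑ π : Equiv.Perm (Fin k),
            (u m * f1 (π m)) * (u m' * f2 (π m')) :=
          Finset.sum_congr rfl fun m _ => Finset.sum_comm
      _ = ∑ m : Fin k, ∑ m' : Fin k, u m * u m' *
            (B + (if m' = m then A1 - B else 0)) := by
          refine Finset.sum_congr rfl fun m _ => Finset.sum_congr rfl fun m' _ => ?_
          rw [← hC m m', Finset.mul_sum]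
          exact Finset.sum_congr rfl fun π _ => by ring
      _ = ∑ m : Fin k, (u m * ((i : ℝ) * B) + u m * u m * (A1 - B)) := by
          refine Finset.sum_congr rfl fun m _ => ?_
          have hsplit : ∀ m' : Fin k, u m * u m' * (B + (if m' = m then A1 - B else 0))
              = u m * u m' * B + (if m' = m then u m * u m' * (A1 - B) else 0) := by
            intro m'; by_cases h : m' = m <;> simp [h] <;> ring
          rw [Finset.sum_congr rfl fun m' _ => hsplit m', Finset.sum_add_distrib,
            Finset.sum_ite_eq' Finset.univ m (fun m' => u m * u m' * (A1 - B)),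
            if_pos (Finset.mem_univ m)]
          have h2 : ∑ m' : Fin k, u m * u m' * B = u m * ((i : ℝ) * B) := by
            rw [← hsu, Finset.sum_mul, Finset.mul_sum]
            exact Finset.sum_congr rfl fun m' _ => by ring
          rw [h2]
      _ = (i : ℝ) * ((i : ℝ) * B) + (i : ℝ) * (A1 - B) := by
          rw [Finset.sum_add_distrib, ← Finset.sum_mul, hsu,
            Finset.sum_congr rfl fun m _ => by rw [huu m]]
          rw [← Finset.sum_mul, hsu]
  -- final assembly
  have hrw1 : ∑ π : Equiv.Perm (Fin k),
      ((Nperm k π i j : ℝ) / k) * ((Nperm k π i (j + 1) : ℝ) / k)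
      = (∑ π : Equiv.Perm (Fin k), (Nperm k π i j : ℝ) * (Nperm k π i (j + 1) : ℝ))
        / ((k : ℝ) * k) := by
    rw [Finset.sum_div]
    exact Finset.sum_congr rfl fun π _ => (div_mul_div_comm _ _ _ _)
  rw [hrw1, hS12, ← Finset.sum_div, ← Finset.sum_div, hS1, hS2, hA1def, hA2def, hBdef]
  field_simp
  ring
end
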